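/- arXiv:2412.12633 — 5 statements merged into one kernel-verified Lean document; each statement's English description precedes it below -/
import Mathlib

section
/- Let Γ = (V, E, s, t, wt) be a finite weighted directed multigraph with weights in a commutative ring R and let k ≥ 1. Let D be the |V|(k−1) × |V|(k−1) diagonal matrix, with rows and columns indexed by pairs (v, t) with v ∈ V and 2 ≤ t ≤ k, whose diagonal entry at (v,t) is Σ_{e ∈ E, s(e)=v} wt(e). For each voltage assignment ν : E → S_k let 𝒜_ν be the matrix with the same index set defined by 𝒜_ν[(v,t),(w,r)] = Σ_{e : s(e)=v, t(e)=w, ν(e)(t)=r} wt(e) − Σ_{e : s(e)=v, t(e)=w, ν(e)(t)=1} wt(e). Then Σ_{ν : E → S_k} det(D − 𝒜_ν) = (k!)^{|E|} · det(D). Equivalently, for independent uniformly random voltages, the random matrix 𝒜 satisfies E[det(D − 𝒜)] = det(D). -/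
/-!
Write `𝒜_ν = ∑ₑ wt e • B(s e, t e, ν e)`, where the rows `(v, t)` of `B(v, w, π)` are the vectors
`e_(w, π t) - e_(w, 1)` and all other rows vanish. As the voltages of distinct edges vary
independently, it suffices to average over one edge at a time, i.e. to show
`∑_π det (Y - c • B(v, w, π)) = (k+1)! • det Y` for every matrix `Y`. Expand the determinant
multilinearly in the rows `(v, t)`. A term in which a nonempty set of these rows is taken from `B`
has rows `φ (π (a i))` with `∑_b φ b = 0` and the `a i` distinct; expanding one such row along
this relation, the collision terms vanish and the others are the same term with `π` reindexed by a
transposition, so its average `T` satisfies `m • T = 0` for some `m ≥ 1`. Torsion-freeness is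
harmless: the identity is polynomial in the weights with integer coefficients, so it suffices to
prove it for the generic weights `X e` in `ℤ[X_e]`.
-/

open Finset Equiv

namespace AlternatingMap

variable {R M N ι α : Type*} [Semiring R] [AddCommMonoid M] [Module R M] [AddCommMonoid N]
  [Module R N] [DecidableEq ι] [DecidableEq α]

theorem update_piecewise_eq_piecewise_mul_swap {β : Type*} (φ : α → β) (a : ι → α)
    {S : Finset ι} (ha : Set.InjOn a S) (x : ι → β) {i₀ : ι} (hi₀ : i₀ ∈ S) {b : α}
    (hb : b ∉ (S.erase i₀).image a) (π : Perm α) :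
    Function.update (S.piecewise (fun i => φ (π (a i))) x) i₀ (φ (π b)) =
      S.piecewise (fun i => φ ((π * swap (a i₀) b) (a i))) x := by
  funext i
  rcases eq_or_ne i i₀ with rfl | hi
  · simp [hi₀]
  by_cases hiS : i ∈ S
  · have hai : a i ≠ a i₀ := fun h => hi (ha hiS hi₀ h)
    have hbi : a i ≠ b := fun h => hb (mem_image.2 ⟨i, mem_erase.2 ⟨hi, hiS⟩, h⟩)
    simp [hi, hiS, swap_apply_of_ne_of_ne hai hbi]
  · simp [hi, hiS]

theorem sum_perm_map_piecewise_eq_zero [Fintype α] (d : M [⋀^ι]→ₗ[R] N) [IsAddTorsionFree N]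
    {φ : α → M} (hφ : ∑ b, φ b = 0) {a : ι → α} {S : Finset ι} (ha : Set.InjOn a S)
    (hS : S.Nonempty) (x : ι → M) :
    ∑ π : Perm α, d (S.piecewise (fun i => φ (π (a i))) x) = 0 := by
  obtain ⟨i₀, hi₀⟩ := hS
  set T := ∑ π : Perm α, d (S.piecewise (fun i => φ (π (a i))) x)
  set B := univ.filter fun b => b ∉ (S.erase i₀).image a
  have hrow : ∀ b π, d (Function.update (S.piecewise (fun i => φ (π (a i))) x) i₀ (φ (π b))) =
      if b ∈ B then d (S.piecewise (fun i => φ ((π * swap (a i₀) b) (a i))) x) else 0 := by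
    intro b π
    by_cases hb : b ∈ (S.erase i₀).image a
    · rw [if_neg (by simp [B, hb])]
      obtain ⟨i, hi, rfl⟩ := mem_image.1 hb
      refine d.map_eq_zero_of_eq _ (i := i₀) (j := i) ?_ (mem_erase.1 hi).1.symm
      simp [(mem_erase.1 hi).1, mem_of_mem_erase hi]
    · rw [if_pos (by simp [B, hb]), update_piecewise_eq_piecewise_mul_swap φ a ha x hi₀ hb]
  have hcount : #B • T = 0 := calc
    #B • T = ∑ b ∈ B, ∑ π : Perm α,
        d (S.piecewise (fun i => φ ((π * swap (a i₀) b) (a i))) x) := by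
      rw [← sum_const]
      exact sum_congr rfl fun b _ => (Equiv.sum_comp (Equiv.mulRight (swap (a i₀) b)) _).symm
    _ = ∑ b, ∑ π : Perm α,
        d (Function.update (S.piecewise (fun i => φ (π (a i))) x) i₀ (φ (π b))) := by
      simp only [hrow, sum_ite_irrel, sum_const_zero, sum_ite_mem, univ_inter]
    _ = ∑ π : Perm α, ∑ b,
        d (Function.update (S.piecewise (fun i => φ (π (a i))) x) i₀ (φ (π b))) := sum_comm
    _ = 0 := by
      refine sum_eq_zero fun π _ => ?_
      rw [← d.map_update_sum, Equiv.sum_comp π φ, hφ, d.map_update_zero]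
  have hB : #B ≠ 0 := by
    refine card_ne_zero.2 ⟨a i₀, mem_filter.2 ⟨mem_univ _, fun h => ?_⟩⟩
    obtain ⟨i, hi, hai⟩ := mem_image.1 h
    exact (mem_erase.1 hi).1 (ha (mem_of_mem_erase hi) hi₀ hai)
  exact (smul_eq_zero.1 hcount).resolve_left hB

theorem sum_perm_map_add_piecewise [Fintype ι] [Fintype α] (d : M [⋀^ι]→ₗ[R] N)
    [IsAddTorsionFree N] {φ : α → M} (hφ : ∑ b, φ b = 0) {a : ι → α} {P : Finset ι}
    (ha : Set.InjOn a P) (x : ι → M) :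
    ∑ π : Perm α, d (x + P.piecewise (fun i => φ (π (a i))) 0) =
      (Fintype.card α).factorial • d x := by
  simp_rw [add_comm x, d.map_add_univ]
  rw [sum_comm, sum_eq_single_of_mem ∅ (mem_univ _)]
  · simp [Fintype.card_perm]
  intro S _ hS
  by_cases hSP : S ⊆ P
  · simp_rw [piecewise_piecewise_of_subset_left hSP]
    exact sum_perm_map_piecewise_eq_zero d hφ (ha.mono hSP) (nonempty_iff_ne_empty.2 hS) x
  · obtain ⟨i, hiS, hiP⟩ := not_subset.1 hSP
    exact sum_eq_zero fun π _ => d.map_coord_zero i (by simp [hiS, hiP])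

end AlternatingMap

section IndependentSum

variable {M N G : Type*} [AddCommGroup M] [AddCommMonoid N] [Fintype G]

theorem Fin.sum_pi_map_sub_sum {n : ℕ} (Φ : M → N) (f : Fin n → G → M) (c : ℕ)
    (h : ∀ i x, ∑ g, Φ (x - f i g) = c • Φ x) (x : M) :
    ∑ ν : Fin n → G, Φ (x - ∑ i, f i (ν i)) = c ^ n • Φ x := by
  induction n generalizing x with
  | zero => simp
  | succ n ih =>
    rw [← (Fin.consEquiv fun _ => G).sum_comp, Fintype.sum_prod_type, sum_comm]
    simp only [Fin.consEquiv_apply, Fin.sum_univ_succ, Fin.cons_zero, Fin.cons_succ,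
      sub_add_eq_sub_sub_swap, h, ← smul_sum]
    rw [ih _ (fun i => h i.succ), smul_smul, pow_succ']

theorem Fintype.sum_pi_map_sub_sum {E : Type*} [Fintype E] [DecidableEq E] (Φ : M → N)
    (f : E → G → M) (c : ℕ) (h : ∀ e x, ∑ g, Φ (x - f e g) = c • Φ x) (x : M) :
    ∑ ν : E → G, Φ (x - ∑ e, f e (ν e)) = c ^ Fintype.card E • Φ x := by
  let σ := Fintype.equivFin E
  rw [← Fin.sum_pi_map_sub_sum Φ (fun i => f (σ.symm i)) c (fun i => h _) x,
    ← (σ.arrowCongr (Equiv.refl G)).symm.sum_comp]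
  refine Fintype.sum_congr _ _ fun ν => ?_
  rw [← σ.symm.sum_comp]
  simp

end IndependentSum

section VoltageLaplacian

variable {V E R : Type*} [DecidableEq V] [CommRing R] {k : ℕ}

/-- The vector `e_(w,i) - e_(w,0)` with the coordinates `(_, 0)` dropped: the coordinate
`(w, j) : V × Fin k` stands for `(w, j.succ)`. -/
def voltageRow (w : V) (i : Fin (k + 1)) : V × Fin k → R := fun q =>
  if q.1 = w then (if i = q.2.succ then 1 else 0) - (if i = 0 then 1 else 0) else 0

theorem sum_voltageRow (w : V) : ∑ i : Fin (k + 1), voltageRow w i = (0 : V × Fin k → R) := by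
  funext q
  by_cases hq : q.1 = w <;> simp [voltageRow, hq, sum_sub_distrib]

def voltageAdjacency (v w : V) (c : R) (π : Perm (Fin (k + 1))) :
    Matrix (V × Fin k) (V × Fin k) R :=
  Matrix.of fun p q => if p.1 = v then c * voltageRow w (π p.2.succ) q else 0

theorem sum_det_sub_voltageAdjacency [Fintype V] [IsAddTorsionFree R]
    (Y : Matrix (V × Fin k) (V × Fin k) R) (v w : V) (c : R) :
    ∑ π, (Y - voltageAdjacency v w c π).det = (k + 1).factorial • Y.det := by
  have hφ : ∑ i : Fin (k + 1), -(c • voltageRow w i) = (0 : V × Fin k → R) := by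
    rw [sum_neg_distrib, ← smul_sum, sum_voltageRow, smul_zero, neg_zero]
  have hinj : Set.InjOn (fun p : V × Fin k => p.2.succ)
      (univ.filter fun p : V × Fin k => p.1 = v) := by
    intro p hp p' hp' h
    simp only [coe_filter, mem_univ, true_and, Set.mem_ofPred_eq] at hp hp'
    exact Prod.ext (hp.trans hp'.symm) (Fin.succ_injective _ h)
  have hrows : ∀ π, Y - voltageAdjacency v w c π =
      Y + Matrix.of ((univ.filter fun p : V × Fin k => p.1 = v).piecewise
        (fun p => -(c • voltageRow w (π p.2.succ))) 0) := by
    intro π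
    refine Matrix.ext fun p q => ?_
    by_cases hp : p.1 = v <;> simp [voltageAdjacency, hp, sub_eq_add_neg]
  simp_rw [hrows]
  have := Matrix.detRowAlternating.sum_perm_map_add_piecewise hφ hinj Y
  rw [Fintype.card_fin] at this
  exact this

variable [Fintype E]

def outDegreeMatrix (s : E → V) (wt : E → R) : Matrix (V × Fin k) (V × Fin k) R :=
  Matrix.diagonal fun p => ∑ e ∈ univ.filter fun e => s e = p.1, wt e

def voltageLaplacian (s t : E → V) (wt : E → R) (ν : E → Perm (Fin (k + 1))) :
    Matrix (V × Fin k) (V × Fin k) R :=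
  outDegreeMatrix s wt - Matrix.of fun p q =>
    (∑ e ∈ univ.filter fun e => s e = p.1 ∧ t e = q.1 ∧ ν e p.2.succ = q.2.succ, wt e) -
      ∑ e ∈ univ.filter fun e => s e = p.1 ∧ t e = q.1 ∧ ν e p.2.succ = 0, wt e

theorem voltageLaplacian_eq_sub_sum (s t : E → V) (wt : E → R) (ν : E → Perm (Fin (k + 1))) :
    voltageLaplacian s t wt ν =
      outDegreeMatrix s wt - ∑ e, voltageAdjacency (s e) (t e) (wt e) (ν e) := by
  unfold voltageLaplacian
  congr 1
  refine Matrix.ext fun p q => ?_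
  simp only [Matrix.of_apply, Matrix.sum_apply, sum_filter, ← sum_sub_distrib]
  refine sum_congr rfl fun e _ => ?_
  by_cases h1 : s e = p.1
  · by_cases h2 : t e = q.1
    · simp [voltageAdjacency, voltageRow, h1, h2, mul_sub, mul_ite]
    · simp [voltageAdjacency, voltageRow, h1, h2, Ne.symm h2]
  · simp [voltageAdjacency, voltageRow, h1, Ne.symm h1]

theorem RingHom.mapMatrix_voltageLaplacian [Fintype V] {S : Type*} [CommRing S] (f : R →+* S)
    (s t : E → V) (wt : E → R) (ν : E → Perm (Fin (k + 1))) :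
    f.mapMatrix (voltageLaplacian s t wt ν) = voltageLaplacian s t (f ∘ wt) ν := by
  refine Matrix.ext fun p q => ?_
  simp [voltageLaplacian, outDegreeMatrix, Matrix.diagonal_apply, apply_ite f, map_sum]

theorem RingHom.mapMatrix_outDegreeMatrix [Fintype V] {S : Type*} [CommRing S] (f : R →+* S)
    (s : E → V) (wt : E → R) :
    f.mapMatrix (outDegreeMatrix (k := k) s wt) = outDegreeMatrix s (f ∘ wt) := by
  refine Matrix.ext fun p q => ?_
  simp [outDegreeMatrix, Matrix.diagonal_apply, apply_ite f, map_sum]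

theorem sum_det_voltageLaplacian [Fintype V] [DecidableEq E] [IsAddTorsionFree R]
    (s t : E → V) (wt : E → R) :
    ∑ ν : E → Perm (Fin (k + 1)), (voltageLaplacian s t wt ν).det =
      (k + 1).factorial ^ Fintype.card E • (outDegreeMatrix (k := k) s wt).det := by
  simp_rw [voltageLaplacian_eq_sub_sum]
  exact Fintype.sum_pi_map_sub_sum Matrix.det
    (fun e π => voltageAdjacency (s e) (t e) (wt e) π) _
    (fun e Y => sum_det_sub_voltageAdjacency Y _ _ _) (outDegreeMatrix s wt)

end VoltageLaplacian

/-- For a weighted digraph with source map `s`, target map `t`, weights `wt`, and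
(k+1)-fold covers (so the fold number ranges over all integers ≥ 1), summing the
determinant of the voltage Laplacian `D - 𝒜_ν` over all voltage assignments
`ν : E → S_{k+1}` gives `((k+1)!)^{|E|} ⬝ det D`; equivalently, for independent
uniformly random voltages, `E[det (D - 𝒜)] = det D`.  Rows and columns are indexed
by `V × Fin k`, where `(v, t) : V × Fin k` encodes the pair `(v, t+2)` with
`2 ≤ t+2 ≤ k+1`, and the element `1 ∈ {1,…,k+1}` is encoded as `0 : Fin (k+1)`. -/
theorem expected_det_voltage_laplacian
    {V E R : Type} [Fintype V] [DecidableEq V] [Fintype E] [DecidableEq E] [CommRing R]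
    (s t : E → V) (wt : E → R) (k : ℕ) :
    ∑ ν : E → Equiv.Perm (Fin (k + 1)),
      Matrix.det
        ((Matrix.diagonal fun p : V × Fin k =>
            ∑ e ∈ Finset.univ.filter fun e => s e = p.1, wt e)
         - Matrix.of fun p q : V × Fin k =>
             (∑ e ∈ Finset.univ.filter
                 fun e => s e = p.1 ∧ t e = q.1 ∧ ν e p.2.succ = q.2.succ, wt e)
           - ∑ e ∈ Finset.univ.filter
                 fun e => s e = p.1 ∧ t e = q.1 ∧ ν e p.2.succ = 0, wt e)
    = ((Nat.factorial (k + 1)) ^ (Fintype.card E) : ℕ) *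
      Matrix.det (Matrix.diagonal fun p : V × Fin k =>
        ∑ e ∈ Finset.univ.filter fun e => s e = p.1, wt e) := by
  change ∑ ν, (voltageLaplacian s t wt ν).det = _ * (outDegreeMatrix s wt).det
  let f := (MvPolynomial.aeval (R := ℤ) wt).toRingHom
  have hf : f ∘ MvPolynomial.X = wt := funext fun e => MvPolynomial.aeval_X wt e
  have h := congrArg f (sum_det_voltageLaplacian (k := k) s t (MvPolynomial.X (R := ℤ)))
  simp only [map_sum, map_nsmul, RingHom.map_det, RingHom.mapMatrix_voltageLaplacian,
    RingHom.mapMatrix_outDegreeMatrix, hf] at h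
  rw [h, nsmul_eq_mul]
end

section
/- (Matrix-Tree Theorem.) Let n ≥ 1, let R be a commutative ring, and let x : {1,…,n} × {1,…,n} → R be arbitrary weights, viewed as the weighted complete digraph G on vertex set {1,…,n} with one edge i → j of weight x_{ij} for each ordered pair (i,j). Let L be the n × n Laplacian matrix L = D − A, where D is diagonal with D[i,i] = Σ_{j=1}^{n} x_{ij} and A[i,j] = x_{ij}. Then for every vertex i, det(L_i^i) = A_i(G), where L_i^i is L with row i and column i removed, and A_i(G) = Σ_f Π_{w ≠ i} x_{w, f(w)}, the sum running over all functions f : {1,…,n}∖{i} → {1,…,n} such that for every vertex w, iterating f (with the convention f(i) = i) starting from w eventually reaches i. -/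
/-!
Write row `a` of the reduced Laplacian as `∑ c, x a c • (eₐ - e_c)` (with `e_i = 0`) and expand
the determinant multilinearly: it becomes the sum over all maps `f` of `∏ x w (f w)` times the
determinant of the reduced Laplacian of the unit-weight functional digraph `w → f w`. If `f` is
an arborescence, that matrix is unitriangular once the vertices are ordered by their distance to
the root, so its determinant is `1`. Otherwise `f` has a cycle avoiding the root; the rows indexed
by the periodic points of `f` then sum to zero, since `f` permutes its periodic points, and the
determinant vanishes.
-/

open Finset Matrix Function

theorem Function.exists_iterate_mem_periodicPts {α : Type*} [Finite α] (f : α → α) (x : α) :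
    ∃ m, f^[m] x ∈ periodicPts f := by
  obtain ⟨k, l, hkl, heq⟩ := Finite.exists_ne_map_eq_of_infinite fun m => f^[m] x
  wlog hlt : k < l generalizing k l
  · exact this l k hkl.symm heq.symm (hkl.lt_or_gt.resolve_left hlt)
  refine ⟨k, mk_mem_periodicPts (Nat.sub_pos_of_lt hlt) ?_⟩
  rw [IsPeriodicPt, IsFixedPt, ← iterate_add_apply, Nat.sub_add_cancel hlt.le]
  exact heq.symm

namespace Matrix

variable {ι κ α R : Type*} [Fintype ι] [DecidableEq ι] [CommRing R]

theorem det_eq_zero_of_vecMul_eq_zero {M : Matrix ι ι R} {c : ι → R} (hc : c ᵥ* M = 0) {j : ι}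
    (hj : IsUnit (c j)) : M.det = 0 := by
  have hrows : ∑ k, c k • M k = 0 := by
    ext b
    simpa [vecMul, dotProduct] using congrFun hc b
  have := det_updateRow_sum M j c
  rw [hrows, det_eq_zero_of_row_eq_zero j (fun _ => by simp)] at this
  exact (hj.smul_eq_zero.mp this.symm)

theorem BlockTriangular.det_eq_one [LinearOrder α] {M : Matrix ι ι R} {b : ι → α}
    (hM : M.BlockTriangular b) (hblock : ∀ a a', b a = b a' → M a a' = (1 : Matrix ι ι R) a a') :
    M.det = 1 := by
  rw [hM.det]
  refine prod_eq_one fun k _ => ?_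
  have : M.toSquareBlock b k = 1 := by
    ext ⟨a, ha⟩ ⟨a', ha'⟩
    simpa [toSquareBlock_def, one_apply, Subtype.ext_iff] using hblock a a' (ha.trans ha'.symm)
  rw [this, det_one]

theorem det_sum_smul_rows [Fintype κ] (x : ι → κ → R) (v : ι → κ → ι → R) :
    det (of fun a => ∑ c, x a c • v a c) =
      ∑ r : ι → κ, (∏ a, x a (r a)) * det (of fun a => v a (r a)) := by
  change detRowAlternating (fun a => ∑ c, x a c • v a c) =
    ∑ r : ι → κ, _ * detRowAlternating fun a => v a (r a)
  exact (detRowAlternating.toMultilinearMap.map_sum _).trans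
    (sum_congr rfl fun r _ => detRowAlternating.toMultilinearMap.map_smul_univ _ _)

theorem det_submatrix_succAbove {n : ℕ} (A : Matrix (Fin (n + 1)) (Fin (n + 1)) R)
    (i : Fin (n + 1)) :
    (A.submatrix i.succAbove i.succAbove).det = (A.submatrix ((↑) : {w // w ≠ i} → _) (↑)).det := by
  rw [← det_submatrix_equiv_self (finSuccAboveEquiv i)]
  rfl

end Matrix

section Arborescence

variable {V R : Type*} [DecidableEq V] [CommRing R]

def extendRoot (i : V) (f : {w // w ≠ i} → V) : V → V :=
  fun u => if h : u = i then i else f ⟨u, h⟩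

@[simp]
theorem extendRoot_self (i : V) (f : {w // w ≠ i} → V) : extendRoot i f i = i :=
  dif_pos rfl

@[simp]
theorem extendRoot_coe {i : V} (f : {w // w ≠ i} → V) (a : {w // w ≠ i}) :
    extendRoot i f a = f a :=
  dif_neg a.2

def IsArborescence (i : V) (f : {w // w ≠ i} → V) : Prop :=
  ∀ w, ∃ m, (extendRoot i f)^[m] w = i

namespace IsArborescence

variable {i : V} {f : {w // w ≠ i} → V}

def depth (h : IsArborescence i f) (w : V) : ℕ := Nat.find (h w)

theorem iterate_depth (h : IsArborescence i f) (w : V) : (extendRoot i f)^[h.depth w] w = i :=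
  Nat.find_spec (h w)

theorem depth_le (h : IsArborescence i f) {w : V} {m : ℕ} (hm : (extendRoot i f)^[m] w = i) :
    h.depth w ≤ m :=
  Nat.find_min' (h w) hm

theorem depth_lt (h : IsArborescence i f) (a : {w // w ≠ i}) : h.depth (f a) < h.depth a := by
  have hpos : 0 < h.depth a := Nat.pos_of_ne_zero fun h0 => a.2 <| by
    simpa [h0] using h.iterate_depth a
  have hreach : (extendRoot i f)^[h.depth a - 1] (f a) = i := by
    rw [← extendRoot_coe f, ← iterate_succ_apply, Nat.succ_eq_add_one, Nat.sub_add_cancel hpos]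
    exact h.iterate_depth a
  have := h.depth_le hreach
  omega

end IsArborescence

variable [Fintype V]

def laplacian (x : V → V → R) : Matrix V V R :=
  of fun a b => (if a = b then ∑ c, x a c else 0) - x a b

variable (R) in
def functionalLaplacian (i : V) (f : {w // w ≠ i} → V) : Matrix {w // w ≠ i} {w // w ≠ i} R :=
  of fun a b => (if a = b then 1 else 0) - (if f a = b.1 then 1 else 0)

theorem det_submatrix_laplacian (x : V → V → R) (i : V) :
    ((laplacian x).submatrix ((↑) : {w // w ≠ i} → V) (↑)).det =
      ∑ f : {w // w ≠ i} → V,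
        (∏ a : {w // w ≠ i}, x a (f a)) * (functionalLaplacian R i f).det := by
  have hrows : (laplacian x).submatrix ((↑) : {w // w ≠ i} → V) (↑) =
      of fun a : {w // w ≠ i} => ∑ c, x a c • fun b : {w // w ≠ i} =>
        ((if a = b then 1 else 0) - (if c = b.1 then 1 else 0) : R) := by
    ext a b
    simp [laplacian, mul_sub, sum_sub_distrib, Subtype.ext_iff]
  rw [hrows, det_sum_smul_rows]
  rfl

theorem IsArborescence.det_functionalLaplacian {i : V} {f : {w // w ≠ i} → V}
    (h : IsArborescence i f) : (functionalLaplacian R i f).det = 1 := by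
  refine BlockTriangular.det_eq_one (b := fun a => OrderDual.toDual (h.depth a)) ?_ ?_
  · intro a b hab
    have hab : h.depth a < h.depth b := hab
    have hfa : f a ≠ b.1 := fun hfa => (h.depth_lt a).not_gt (hfa ▸ hab)
    simp [functionalLaplacian, hfa, ne_of_apply_ne (fun c : {w // w ≠ i} => h.depth c) hab.ne]
  · intro a b hab
    have hfa : f a ≠ b.1 := fun hfa => (h.depth_lt a).ne (hfa ▸ OrderDual.toDual.injective hab.symm)
    simp [functionalLaplacian, hfa, one_apply]

end Arborescence

section Cycle

variable {V R : Type*} [DecidableEq V] [Fintype V] [CommRing R] {i : V} {f : {w // w ≠ i} → V}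

open Classical

theorem exists_mem_periodicPts_of_not_isArborescence (h : ¬IsArborescence i f) :
    ∃ a : {w // w ≠ i}, a.1 ∈ periodicPts (extendRoot i f) := by
  obtain ⟨w, hw⟩ : ∃ w, ∀ m, (extendRoot i f)^[m] w ≠ i := by simpa [IsArborescence] using h
  obtain ⟨m, hm⟩ := exists_iterate_mem_periodicPts (extendRoot i f) w
  exact ⟨⟨_, hw m⟩, hm⟩

theorem sum_ite_mem_periodicPts_and_eq (b : {w // w ≠ i}) :
    ∑ a : {w // w ≠ i}, (if a.1 ∈ periodicPts (extendRoot i f) ∧ f a = b.1 then (1 : R) else 0) =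
      if b.1 ∈ periodicPts (extendRoot i f) then 1 else 0 := by
  set P := periodicPts (extendRoot i f)
  have hbij : Set.BijOn (extendRoot i f) P P := bijOn_periodicPts _
  by_cases hb : b.1 ∈ P
  · obtain ⟨a₀, ha₀, hfa₀⟩ := hbij.surjOn hb
    have ha₀i : a₀ ≠ i := by rintro rfl; exact b.2 (by simpa using hfa₀.symm)
    rw [if_pos hb, Fintype.sum_eq_single ⟨a₀, ha₀i⟩]
    · have hfa₀' : f ⟨a₀, ha₀i⟩ = b := (extendRoot_coe f ⟨a₀, ha₀i⟩).symm.trans hfa₀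
      simp [ha₀, hfa₀']
    · rintro a ha
      refine if_neg fun ⟨haP, hfa⟩ => ha (Subtype.ext (hbij.injOn haP ha₀ ?_))
      exact ((extendRoot_coe f a).trans hfa).trans hfa₀.symm
  · rw [if_neg hb]
    refine Fintype.sum_eq_zero _ fun a => if_neg ?_
    rintro ⟨haP, hfa⟩
    exact hb (hfa ▸ by simpa using hbij.mapsTo haP)

theorem vecMul_functionalLaplacian_periodicPts :
    (fun a : {w // w ≠ i} => if a.1 ∈ periodicPts (extendRoot i f) then (1 : R) else 0) ᵥ*
      functionalLaplacian R i f = 0 := by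
  ext b
  simp only [vecMul, dotProduct, functionalLaplacian, of_apply, mul_sub, sum_sub_distrib,
    ite_zero_mul_ite_zero, mul_one, sum_ite_mem_periodicPts_and_eq, Pi.zero_apply]
  rw [Fintype.sum_eq_single b fun a ha => if_neg fun h => ha h.2]
  simp

theorem det_functionalLaplacian_of_not_isArborescence (h : ¬IsArborescence i f) :
    (functionalLaplacian R i f).det = 0 := by
  obtain ⟨a, ha⟩ := exists_mem_periodicPts_of_not_isArborescence h
  exact det_eq_zero_of_vecMul_eq_zero vecMul_functionalLaplacian_periodicPts (j := a) (by simp [ha])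

end Cycle

open Classical in
/-- Matrix-Tree Theorem for the weighted complete digraph on `n + 1 ≥ 1` vertices
(encoded as `Fin (n+1)`), with one edge `a → b` of weight `x a b` for each ordered pair.
Let `L = D - A` be the Laplacian, `D` diagonal with `D[a,a] = Σ_c x a c` and
`A[a,b] = x a b`.  Then for every vertex `i`, the determinant of `L` with row `i` and
column `i` removed equals `A_i(G)`, the weighted sum over all arborescences rooted at
`i`: functions `f` on the vertices `w ≠ i` whose functional digraph (edges `w → f w`,
with the convention `f i = i`) has every vertex eventually reaching `i` under
iteration, with weight `Π_{w ≠ i} x w (f w)`. -/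
theorem matrix_tree_theorem
    {R : Type} [CommRing R] (n : ℕ) (x : Fin (n + 1) → Fin (n + 1) → R) (i : Fin (n + 1)) :
    Matrix.det
      ((Matrix.of fun a b : Fin (n + 1) =>
          (if a = b then ∑ c, x a c else 0) - x a b).submatrix i.succAbove i.succAbove)
    = ∑ f : {w : Fin (n + 1) // w ≠ i} → Fin (n + 1),
        if (∀ w : Fin (n + 1), ∃ m : ℕ,
              (fun u => if h : u = i then i else f ⟨u, h⟩)^[m] w = i)
        then ∏ w : {w : Fin (n + 1) // w ≠ i}, x w (f w) else 0 := by
  rw [det_submatrix_succAbove]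
  refine (det_submatrix_laplacian x i).trans (Fintype.sum_congr _ _ fun f => ?_)
  split_ifs with h
  · rw [IsArborescence.det_functionalLaplacian h, mul_one]
  · rw [det_functionalLaplacian_of_not_isArborescence h, mul_zero]
end

section
/- Let Γ = (V, E, s, t, wt) be a finite weighted directed multigraph with weights in a commutative ring R, let k ≥ 1, let ν : E → S_k be a voltage assignment, and let Γ̃_ν be the derived k-fold cover of Γ. Let 𝓛_ν = D − 𝒜_ν be the voltage Laplacian of Γ. Then for every vertex v ∈ V and every x ∈ {1,…,k}, one has k · A_{(v,x)}(Γ̃_ν) = det(𝓛_ν) · A_v(Γ). (Equivalently, A_{ṽ}(Γ̃)/A_v(Γ) = (1/k) det 𝓛(Γ) for any lift ṽ of v.) -/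
open Classical in
/-- The weighted sum of spanning arborescences rooted at `v` of the directed multigraph
with edge set `E`, vertex set `V`, source map `s`, target map `t` and weights `wt`.
An arborescence rooted at `v` assigns to each vertex `w ≠ v` an edge `T w` with source `w`,
such that iterating the step map `w ↦ t (T w)` from any vertex eventually reaches `v`. -/
noncomputable def arbSum {V E R : Type} [Fintype V] [DecidableEq V] [Fintype E]
    [CommRing R] (s t : E → V) (wt : E → R) (v : V) : R :=
  ∑ T : {w : V // w ≠ v} → E,
    if (∀ w : {w : V // w ≠ v}, s (T w) = (w : V)) ∧
       (∀ w : V, ∃ n : ℕ,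
         (fun u => if h : u = v then v else t (T ⟨u, h⟩))^[n] w = v)
    then ∏ w : {w : V // w ≠ v}, wt (T w) else 0


open Matrix Finset


open Matrix Finset

variable {I m n R : Type} [Fintype I] [DecidableEq I] [Fintype m] [DecidableEq m]
  [Fintype n] [DecidableEq n] [CommRing R]

lemma det_eq_zero_of_rowsum [Nonempty I] (A : Matrix I I R)
    (h : A *ᵥ (fun _ => 1) = 0) : A.det = 0 := by
  have h2 : (adjugate A * A) *ᵥ (fun _ => 1) = 0 := by
    rw [← mulVec_mulVec, h, mulVec_zero]
  rw [adjugate_mul] at h2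
  have := congrFun h2 (Classical.arbitrary I)
  simpa [mulVec, dotProduct, Matrix.smul_apply, Matrix.one_apply] using this

lemma adjugate_row_eq (A : Matrix I I R) (h : A *ᵥ (fun _ => 1) = 0)
    (i i' j : I) : adjugate A i j = adjugate A i' j := by
  have key : ∀ u : I → R, (∑ a, u a) = 0 → (A.updateRow j u).det = 0 := by
    intro u hu
    have : Nonempty I := ⟨j⟩
    apply det_eq_zero_of_rowsum
    ext a
    by_cases ha : a = j
    · subst ha
      simp [mulVec, dotProduct, hu]
    · have h3 := congrFun h a
      simp only [mulVec, dotProduct, mul_one, Pi.zero_apply] at h3 ⊢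
      simpa [updateRow_apply, ha] using h3
  have hsplit : (Pi.single i (1:R) : I → R) = ((Pi.single i (1:R) : I → R) - Pi.single i' 1) + Pi.single i' 1 :=
    by funext a; simp
  rw [adjugate_apply, adjugate_apply, hsplit, det_updateRow_add]
  rw [key ((Pi.single i (1:R) : I → R) - Pi.single i' 1) (by simp), zero_add]

lemma adjugate_fromBlocks₁₁ (A : Matrix m m R) (C : Matrix n m R) (D : Matrix n n R)
    (i j : m) :
    adjugate (fromBlocks A 0 C D) (Sum.inl i) (Sum.inl j) = D.det * adjugate A i j := by
  rw [adjugate_apply, adjugate_apply]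
  have h : (fromBlocks A 0 C D).updateRow (Sum.inl j) (Pi.single (Sum.inl i) 1)
      = fromBlocks (A.updateRow j (Pi.single i 1)) 0 C D := by
    ext a b
    cases a <;> cases b <;>
      simp [updateRow_apply, Pi.single_apply, Sum.inl.injEq]
  rw [h, det_fromBlocks_zero₁₂]
  ring

lemma adjugate_fromBlocks₁₂ (A : Matrix m m R) (C : Matrix n m R) (D : Matrix n n R)
    (i : m) (j : n) :
    adjugate (fromBlocks A 0 C D) (Sum.inl i) (Sum.inr j) = 0 := by
  rw [adjugate_apply]
  have h : (fromBlocks A 0 C D).updateRow (Sum.inr j) (Pi.single (Sum.inl i) 1)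
      = fromBlocks A 0 (C.updateRow j (Pi.single i 1)) (D.updateRow j 0) := by
    ext a b
    cases a <;> cases b <;>
      simp [updateRow_apply, Pi.single_apply, Sum.inl.injEq]
  rw [h, det_fromBlocks_zero₁₂]
  have : (D.updateRow j 0).det = 0 :=
    det_eq_zero_of_row_eq_zero j (by simp)
  rw [this, mul_zero]

lemma adjugate_fromBlocks₂₂ (A : Matrix m m R) (C : Matrix n m R) (D : Matrix n n R)
    (i j : n) :
    adjugate (fromBlocks A 0 C D) (Sum.inr i) (Sum.inr j) = A.det * adjugate D i j := by
  rw [adjugate_apply, adjugate_apply]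
  have h : (fromBlocks A 0 C D).updateRow (Sum.inr j) (Pi.single (Sum.inr i) 1)
      = fromBlocks A 0 (C.updateRow j 0) (D.updateRow j (Pi.single i 1)) := by
    ext a b
    cases a <;> cases b <;>
      simp [updateRow_apply, Pi.single_apply, Sum.inr.injEq]
  rw [h, det_fromBlocks_zero₁₂]

/-- reindexing equivalence splitting off `i` -/
def splitNe (i : I) : Unit ⊕ {j : I // j ≠ i} ≃ I where
  toFun x := Sum.elim (fun _ => i) Subtype.val x
  invFun j := if h : j = i then Sum.inl () else Sum.inr ⟨j, h⟩
  left_inv := by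
    rintro (u | ⟨j, hj⟩)
    · simp
    · simp [hj]
  right_inv := by intro j; by_cases h : j = i <;> simp [h]

lemma adjugate_diag (A : Matrix I I R) (i : I) :
    adjugate A i i
      = (A.submatrix (Subtype.val : {j : I // j ≠ i} → I) Subtype.val).det := by
  rw [adjugate_apply, ← det_submatrix_equiv_self (splitNe i)]
  have h : (A.updateRow i (Pi.single i 1)).submatrix (splitNe i) (splitNe i)
      = fromBlocks 1 0 (Matrix.of fun (a : {j : I // j ≠ i}) (_ : Unit) => A a.1 i)
          (A.submatrix Subtype.val Subtype.val) := by
    ext a b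
    cases a with
    | inl u =>
      cases b with
      | inl u' => simp [splitNe, updateRow_apply, Pi.single_apply]
      | inr b => simp [splitNe, updateRow_apply, Pi.single_apply, (b.2 : b.1 ≠ i).symm, b.2]
    | inr a =>
      cases b with
      | inl u' => simp [splitNe, updateRow_apply, a.2]
      | inr b => simp [splitNe, updateRow_apply, a.2]
  rw [h, det_fromBlocks_zero₁₂, det_one, one_mul]


open Classical in
/-- determinant of the "identity minus functional step" matrix: 1 if every vertex
reaches `v`, else 0 -/
lemma det_step {V : Type} [Fintype V] [DecidableEq V] (v : V) (g : {w : V // w ≠ v} → V) :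
    (Matrix.of fun w u : {w : V // w ≠ v} =>
      (if w = u then (1:R) else 0) - (if g w = ↑u then 1 else 0)).det
    = if (∀ w : V, ∃ n : ℕ, (fun u => if h : u = v then v else g ⟨u, h⟩)^[n] w = v)
      then 1 else 0 := by
  set f : V → V := fun u => if h : u = v then v else g ⟨u, h⟩ with hf
  have hfw : ∀ w : {w : V // w ≠ v}, f ↑w = g w := fun w => dif_neg w.2
  set M : Matrix {w : V // w ≠ v} {w : V // w ≠ v} R :=
    Matrix.of fun w u => (if w = u then (1:R) else 0) - (if g w = ↑u then 1 else 0) with hM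
  by_cases hreach : ∀ w : V, ∃ n : ℕ, f^[n] w = v
  · rw [if_pos hreach]
    have rank_lt : ∀ w u : {w : V // w ≠ v}, g w = ↑u →
        Nat.find (hreach ↑u) < Nat.find (hreach ↑w) := by
      intro w u hgw
      have h0 : Nat.find (hreach ↑w) ≠ 0 := by
        intro h0
        have hsp := Nat.find_spec (hreach ↑w)
        rw [h0] at hsp
        exact w.2 hsp
      obtain ⟨m, hm⟩ := Nat.exists_eq_succ_of_ne_zero h0
      have hspec := Nat.find_spec (hreach ↑w)
      rw [hm, Function.iterate_succ_apply, hfw, hgw] at hspec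
      have hle : Nat.find (hreach ↑u) ≤ m := Nat.find_le hspec
      omega
    have hbt : BlockTriangular M (fun w => OrderDual.toDual (Nat.find (hreach ↑w))) := by
      intro i j hij
      have hij' : Nat.find (hreach ↑i) < Nat.find (hreach ↑j) := hij
      have hne : i ≠ j := by
        rintro rfl; exact lt_irrefl _ hij'
      have hg : g i ≠ ↑j := fun h => by
        have := rank_lt i j h; omega
      simp [hM, hne, hg]
    rw [hbt.det]
    refine Finset.prod_eq_one fun a _ => ?_
    have hblock : M.toSquareBlock (fun w => OrderDual.toDual (Nat.find (hreach ↑w))) a = 1 := by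
      ext i j
      rcases i with ⟨i, hi⟩
      rcases j with ⟨j, hj⟩
      by_cases hij : i = j
      · subst hij
        have hgi : g i ≠ ↑i := fun h => lt_irrefl _ (rank_lt i i h)
        simp [Matrix.toSquareBlock, Matrix.toSquareBlockProp, hM, hgi, Matrix.one_apply]
      · have hgi : g i ≠ ↑j := by
          intro h
          have h2 := rank_lt i j h
          rw [← hj] at hi
          have : Nat.find (hreach ↑i) = Nat.find (hreach ↑j) := congrArg OrderDual.ofDual hi
          omega
        have hij' : (↑i : V) ≠ ↑j := fun h => hij (Subtype.ext h)
        simp [Matrix.toSquareBlock, Matrix.toSquareBlockProp, hM, hij, hij', hgi,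
          Matrix.one_apply, Subtype.ext_iff]
    rw [hblock, det_one]
  · rw [if_neg hreach]
    push_neg at hreach
    obtain ⟨w₀, hw₀⟩ := hreach
    obtain ⟨a, b, hab, heq⟩ := Finite.exists_ne_map_eq_of_infinite (fun n : ℕ => f^[n] w₀)
    set u₁ := f^[min a b] w₀ with hu₁
    have hu₁v : ∀ n, f^[n] u₁ ≠ v := fun n => by
      rw [hu₁, ← Function.iterate_add_apply]; exact hw₀ _
    have hex : ∃ p, 0 < p ∧ f^[p] u₁ = u₁ := by
      refine ⟨max a b - min a b, ?_, ?_⟩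
      · rcases hab.lt_or_gt with h | h
        · omega
        · omega
      · rw [hu₁, ← Function.iterate_add_apply,
          Nat.sub_add_cancel (min_le_max)]
        rcases le_total a b with h | h
        · rw [max_eq_right h, min_eq_left h]; exact heq.symm
        · rw [max_eq_left h, min_eq_right h]; exact heq
    set p := Nat.find hex with hp'
    obtain ⟨hppos, hpfix⟩ : 0 < p ∧ f^[p] u₁ = u₁ := Nat.find_spec hex
    set elt : Fin p → {w : V // w ≠ v} := fun m => ⟨f^[(m : ℕ)] u₁, hu₁v m⟩ with helt
    have heltinj : Function.Injective elt := by
      have key : ∀ m m' : Fin p, (m : ℕ) < (m' : ℕ) →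
          f^[(m:ℕ)] u₁ = f^[(m':ℕ)] u₁ → False := by
        intro m m' h h1
        have hm' := m'.isLt
        have hq : f^[p - (m':ℕ) + (m:ℕ)] u₁ = u₁ := by
          rw [Function.iterate_add_apply, h1, ← Function.iterate_add_apply,
            Nat.sub_add_cancel hm'.le, hpfix]
        have hlt : p - (m':ℕ) + (m:ℕ) < p := by omega
        exact Nat.find_min hex hlt ⟨by omega, hq⟩
      intro m m' hmm'
      have h1 : f^[(m:ℕ)] u₁ = f^[(m':ℕ)] u₁ := congrArg Subtype.val hmm'
      by_contra hne
      have hne' : (m : ℕ) ≠ (m' : ℕ) := fun h => hne (Fin.ext h)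
      rcases hne'.lt_or_gt with h | h
      · exact key m m' h h1
      · exact key m' m h h1.symm
    have hmul : ∀ k, f^[p * k] u₁ = u₁ := by
      intro k
      induction k with
      | zero => simp
      | succ n ih =>
        rw [Nat.mul_succ, Function.iterate_add_apply, hpfix, ih]
    set succ : Fin p → Fin p := fun m => ⟨((m:ℕ)+1) % p, Nat.mod_lt _ hppos⟩ with hsucc
    have hsuccinj : Function.Injective succ := by
      intro m m' h
      have h1 : ((m:ℕ)+1) % p = ((m':ℕ)+1) % p := congrArg Fin.val h
      have hm := m.isLt; have hm' := m'.isLt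
      apply Fin.ext
      rcases Nat.lt_or_ge ((m:ℕ)+1) p with h2 | h2 <;>
        rcases Nat.lt_or_ge ((m':ℕ)+1) p with h3 | h3
      · rw [Nat.mod_eq_of_lt h2, Nat.mod_eq_of_lt h3] at h1; omega
      · have : (m':ℕ)+1 = p := by omega
        rw [Nat.mod_eq_of_lt h2, this, Nat.mod_self] at h1; omega
      · have : (m:ℕ)+1 = p := by omega
        rw [this, Nat.mod_self, Nat.mod_eq_of_lt h3] at h1; omega
      · omega
    have hsuccbij : Function.Bijective succ := Finite.injective_iff_bijective.mp hsuccinj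
    have hstep : ∀ m : Fin p, g (elt m) = ↑(elt (succ m)) := by
      intro m
      rw [← hfw]
      show f (f^[(m:ℕ)] u₁) = f^[(((m:ℕ)+1) % p)] u₁
      rw [← Function.iterate_succ_apply' f (↑m) u₁, Nat.succ_eq_add_one]
      conv_lhs => rw [← Nat.mod_add_div ((m:ℕ)+1) p]
      rw [Function.iterate_add_apply, hmul]
    set S : Finset {w : V // w ≠ v} := Finset.image elt univ with hS
    have hsum : ∀ u : {w : V // w ≠ v}, ∑ w ∈ S, M w u = 0 := by
      intro u
      rw [hS, Finset.sum_image (fun m _ m' _ h => heltinj h)]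
      have h1 : ∀ m : Fin p, M (elt m) u
          = (if elt m = u then (1:R) else 0) - (if elt (succ m) = u then 1 else 0) := by
        intro m
        show (if elt m = u then (1:R) else 0) - (if g (elt m) = ↑u then 1 else 0) = _
        rw [hstep m]
        congr 1
        simp [Subtype.ext_iff]
      rw [Finset.sum_congr rfl (fun m _ => h1 m), Finset.sum_sub_distrib]
      rw [Fintype.sum_bijective succ hsuccbij
        (fun m => if elt (succ m) = u then (1:R) else 0)
        (fun m => if elt m = u then (1:R) else 0) (fun m => rfl)]
      exact sub_self _
    set e₀ : {w : V // w ≠ v} := elt ⟨0, hppos⟩ with he₀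
    set c : {w : V // w ≠ v} → R := fun w => if w ∈ S.erase e₀ then -1 else 0 with hc
    have he₀S : e₀ ∈ S := Finset.mem_image_of_mem elt (mem_univ _)
    have hrow : M e₀ = ∑ w, c w • M w := by
      funext u
      have hs0 : ∑ w ∈ S, M w u = 0 := hsum u
      have h2 : (∑ w, c w • M w) u = ∑ w : {w : V // w ≠ v}, c w * M w u := by
        rw [Finset.sum_apply]; rfl
      rw [h2]
      have h3 : ∀ w : {w : V // w ≠ v}, c w * M w u
          = if w ∈ S.erase e₀ then -(M w u) else 0 := by
        intro w
        rw [hc]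
        by_cases hw : w ∈ S.erase e₀ <;> simp [hw]
      rw [Finset.sum_congr rfl (fun w _ => h3 w), Finset.sum_ite_mem, Finset.univ_inter,
        Finset.sum_neg_distrib]
      have h4 : M e₀ u + ∑ w ∈ S.erase e₀, M w u = ∑ w ∈ S, M w u :=
        Finset.add_sum_erase S (fun w => M w u) he₀S
      rw [hs0] at h4
      linear_combination h4
    have hc0 : c e₀ = 0 := by simp [hc]
    have hdet : M.det = c e₀ • M.det := by
      conv_lhs => rw [← Matrix.updateRow_eq_self M e₀, hrow]
      exact Matrix.det_updateRow_sum M e₀ c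
    rw [hdet, hc0, zero_smul]




open Classical in
lemma matrixTree {V E : Type} [Fintype V] [DecidableEq V] [Fintype E]
    (s t : E → V) (wt : E → R) (v : V) :
    arbSum s t wt v =
      (((Matrix.diagonal fun w : V => ∑ e ∈ univ.filter fun e => s e = w, wt e)
        - Matrix.of fun w u : V => ∑ e ∈ univ.filter fun e => s e = w ∧ t e = u, wt e).submatrix
        (Subtype.val : {w : V // w ≠ v} → V) Subtype.val).det := by
  classical
  set rowv : E → {w : V // w ≠ v} → R :=
    fun e u => (if s e = ↑u then 1 else 0) - (if t e = ↑u then 1 else 0) with hrowv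
  -- Step 1: rows of the reduced Laplacian expand as sums over edges
  have hexpand : (((Matrix.diagonal fun w : V => ∑ e ∈ univ.filter fun e => s e = w, wt e)
        - Matrix.of fun w u : V => ∑ e ∈ univ.filter fun e => s e = w ∧ t e = u, wt e).submatrix
        (Subtype.val : {w : V // w ≠ v} → V) Subtype.val)
      = Matrix.of fun (w u : {w : V // w ≠ v}) =>
          ∑ e : E, ((if s e = ↑w then wt e else 0) • rowv e) u := by
    ext w u
    simp only [Matrix.submatrix_apply, Matrix.sub_apply, Matrix.diagonal_apply, Matrix.of_apply,
      Pi.smul_apply, smul_eq_mul, hrowv]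
    have key : ∀ e : E, (if s e = ↑w then wt e else 0) *
        ((if s e = ↑u then (1:R) else 0) - (if t e = ↑u then 1 else 0))
        = (if s e = ↑w ∧ s e = ↑u then wt e else 0)
          - (if s e = ↑w ∧ t e = ↑u then wt e else 0) := by
      intro e
      by_cases h1 : s e = ↑w
      · by_cases h2 : s e = ↑u
        · have h4 : (↑w : V) = ↑u := h1.symm.trans h2
          by_cases h3 : t e = ↑u <;> simp [h1, h2, h3, h4]
        · have h4 : (↑w : V) ≠ ↑u := fun hh => h2 (h1.trans hh)
          by_cases h3 : t e = ↑u <;> simp [h1, h2, h3, h4]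
      · by_cases h3 : t e = ↑u <;> simp [h1, h3]
    rw [Finset.sum_congr rfl fun e _ => key e, Finset.sum_sub_distrib]
    congr 1
    · by_cases hwu : (↑w : V) = ↑u
      · rw [if_pos hwu, Finset.sum_filter]
        refine Finset.sum_congr rfl fun e _ => ?_
        simp [← hwu]
      · rw [if_neg hwu]
        symm
        refine Finset.sum_eq_zero fun e _ => ?_
        rw [if_neg]
        rintro ⟨h1, h2⟩
        exact hwu (h1 ▸ h2)
    · exact Finset.sum_filter _ _
  rw [hexpand]
  -- Step 2: multilinear expansion of the determinant
  have h1 : (Matrix.of fun (w u : {w : V // w ≠ v}) =>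
          ∑ e : E, ((if s e = ↑w then wt e else 0) • rowv e) u).det
      = ∑ T : {w : V // w ≠ v} → E,
          (Matrix.of fun (w u : {w : V // w ≠ v}) =>
            ((if s (T w) = ↑w then wt (T w) else 0) • rowv (T w)) u).det := by
    have hm : (Matrix.of fun (w u : {w : V // w ≠ v}) =>
          ∑ e : E, ((if s e = ↑w then wt e else 0) • rowv e) u)
        = Matrix.of (fun (w : {w : V // w ≠ v}) =>
            ∑ e : E, (if s e = ↑w then wt e else 0) • rowv e) := by
      ext w u
      rw [Matrix.of_apply, Matrix.of_apply, Finset.sum_apply]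
    rw [hm]
    exact (Matrix.detRowAlternating (R := R) (n := {w : V // w ≠ v})).toMultilinearMap.map_sum
      (g := fun w e => (if s e = ↑w then wt e else 0) • rowv e)
  rw [h1]
  -- Step 3: pull out the scalars
  have h2 : ∀ T : {w : V // w ≠ v} → E,
      (Matrix.of fun (w u : {w : V // w ≠ v}) =>
        ((if s (T w) = ↑w then wt (T w) else 0) • rowv (T w)) u).det
      = (∏ w : {w : V // w ≠ v}, if s (T w) = ↑w then wt (T w) else 0)
          • (Matrix.of fun (w u : {w : V // w ≠ v}) => rowv (T w) u).det := by
    intro T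
    exact (Matrix.detRowAlternating (R := R)
      (n := {w : V // w ≠ v})).toMultilinearMap.map_smul_univ
      (fun w => if s (T w) = ↑w then wt (T w) else 0) (fun w => rowv (T w))
  rw [Finset.sum_congr rfl fun T _ => h2 T]
  -- Step 4: identify each term
  rw [arbSum]
  refine Finset.sum_congr rfl fun T _ => ?_
  by_cases hsT : ∀ w : {w : V // w ≠ v}, s (T w) = ↑w
  · have hprod : (∏ w : {w : V // w ≠ v}, if s (T w) = ↑w then wt (T w) else 0)
        = ∏ w : {w : V // w ≠ v}, wt (T w) :=
      Finset.prod_congr rfl fun w _ => if_pos (hsT w)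
    have hmat : (Matrix.of fun (w u : {w : V // w ≠ v}) => rowv (T w) u)
        = Matrix.of fun (w u : {w : V // w ≠ v}) =>
            (if w = u then (1:R) else 0) - (if t (T w) = ↑u then 1 else 0) := by
      ext w u
      rw [hrowv]
      simp only [Matrix.of_apply, hsT w]
      congr 1
      by_cases h : w = u
      · simp [h]
      · have h' : (↑w : V) ≠ ↑u := fun hh => h (Subtype.ext hh)
        simp [h, h']
    rw [hprod, hmat]
    have hd := det_step (R := R) v (fun w => t (T w))
    rw [hd]
    by_cases hr : ∀ w : V, ∃ n : ℕ,
        (fun u => if h : u = v then v else t (T ⟨u, h⟩))^[n] w = v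
    · rw [if_pos ⟨hsT, hr⟩, if_pos hr, smul_eq_mul, mul_one]
    · rw [if_neg (fun hh => hr hh.2), if_neg hr, smul_eq_mul, mul_zero]
  · push_neg at hsT
    obtain ⟨w, hw⟩ := hsT
    rw [if_neg (fun hh => hw (hh.1 w))]
    have hz : (∏ w : {w : V // w ≠ v}, if s (T w) = ↑w then wt (T w) else 0) = 0 :=
      Finset.prod_eq_zero (Finset.mem_univ w) (if_neg hw)
    rw [hz, zero_smul]

lemma lap_rowsum {V E : Type} [Fintype V] [DecidableEq V] [Fintype E]
    (s t : E → V) (wt : E → R) :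
    ((Matrix.diagonal fun w : V => ∑ e ∈ univ.filter fun e => s e = w, wt e)
      - Matrix.of fun w u : V => ∑ e ∈ univ.filter (fun e => s e = w ∧ t e = u), wt e)
      *ᵥ (fun _ => (1:R)) = 0 := by
  ext w
  simp only [Matrix.mulVec, dotProduct, Matrix.sub_apply, Matrix.diagonal_apply,
    Matrix.of_apply, mul_one, Pi.zero_apply]
  rw [Finset.sum_sub_distrib]
  have h1 : ∑ u : V, (if w = u then ∑ e ∈ univ.filter (fun e => s e = w), wt e else 0)
      = ∑ e ∈ univ.filter (fun e => s e = w), wt e := by simp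
  have h2 : ∑ u : V, ∑ e ∈ univ.filter (fun e => s e = w ∧ t e = u), wt e
      = ∑ e ∈ univ.filter (fun e => s e = w), wt e := by
    rw [Finset.sum_congr rfl (fun u _ => Finset.sum_filter _ _), Finset.sum_comm,
      Finset.sum_filter]
    refine Finset.sum_congr rfl fun e _ => ?_
    by_cases h : s e = w
    · simp [h]
    · simp [h]
  rw [h1, h2, sub_self]

/-- (Chepuri et al.)  For a weighted digraph `Γ = (V, E, s, t, wt)`, a voltage
assignment `ν : E → S_{k+1}` (the fold number `k+1` ranges over all integers ≥ 1),
and the derived (k+1)-fold cover `Γ̃_ν` (vertices `V × Fin (k+1)`, edges `E × Fin (k+1)`,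
source `(e,x) ↦ (s e, x)`, target `(e,x) ↦ (t e, ν e x)`, weight `wt e`),
we have `(k+1) ⬝ A_{(v,x)}(Γ̃_ν) = det (𝓛_ν) ⬝ A_v(Γ)` for every vertex `v` and every
lift `(v, x)`, where `𝓛_ν = D - 𝒜_ν` is the voltage Laplacian, indexed by `V × Fin k`
(the pair `(v, t) : V × Fin k` encodes `(v, t+2)` with `2 ≤ t+2 ≤ k+1`, and the element
`1 ∈ {1,…,k+1}` is encoded as `0 : Fin (k+1)`). -/
theorem voltage_laplacian_arborescence_ratio
    {V E R : Type} [Fintype V] [DecidableEq V] [Fintype E] [DecidableEq E] [CommRing R]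
    (s t : E → V) (wt : E → R) (k : ℕ) (ν : E → Equiv.Perm (Fin (k + 1)))
    (v : V) (x : Fin (k + 1)) :
    ((k + 1 : ℕ) : R) *
      arbSum (fun p : E × Fin (k + 1) => (s p.1, p.2))
        (fun p : E × Fin (k + 1) => (t p.1, (ν p.1) p.2))
        (fun p : E × Fin (k + 1) => wt p.1) ((v, x))
    = Matrix.det
        ((Matrix.diagonal fun p : V × Fin k =>
            ∑ e ∈ Finset.univ.filter fun e => s e = p.1, wt e)
         - Matrix.of fun p q : V × Fin k =>
             (∑ e ∈ Finset.univ.filter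
                 fun e => s e = p.1 ∧ t e = q.1 ∧ ν e p.2.succ = q.2.succ, wt e)
           - ∑ e ∈ Finset.univ.filter
                 fun e => s e = p.1 ∧ t e = q.1 ∧ ν e p.2.succ = 0, wt e)
      * arbSum s t wt v := by
  classical
  -- base Laplacian
  set L : Matrix V V R :=
    (Matrix.diagonal fun w : V => ∑ e ∈ univ.filter fun e => s e = w, wt e)
      - Matrix.of (fun w u : V => ∑ e ∈ univ.filter (fun e => s e = w ∧ t e = u), wt e)
    with hL
  -- voltage Laplacian (as in the statement)
  set LL : Matrix (V × Fin k) (V × Fin k) R :=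
    (Matrix.diagonal fun p : V × Fin k => ∑ e ∈ univ.filter fun e => s e = p.1, wt e)
      - Matrix.of (fun p q : V × Fin k =>
          (∑ e ∈ univ.filter fun e => s e = p.1 ∧ t e = q.1 ∧ ν e p.2.succ = q.2.succ, wt e)
          - ∑ e ∈ univ.filter fun e => s e = p.1 ∧ t e = q.1 ∧ ν e p.2.succ = 0, wt e)
    with hLL
  -- cover Laplacian
  set Lc : Matrix (V × Fin (k+1)) (V × Fin (k+1)) R :=
    (Matrix.diagonal fun w : V × Fin (k+1) =>
        ∑ ec ∈ univ.filter fun ec : E × Fin (k+1) => (s ec.1, ec.2) = w, wt ec.1)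
      - Matrix.of (fun w u : V × Fin (k+1) =>
          ∑ ec ∈ univ.filter (fun ec : E × Fin (k+1) =>
            (s ec.1, ec.2) = w ∧ (t ec.1, ν ec.1 ec.2) = u), wt ec.1)
    with hLc
  have hbase : arbSum s t wt v = adjugate L v v := by
    rw [matrixTree s t wt v, hL]
    exact (adjugate_diag _ v).symm
  have hcov : arbSum (fun p : E × Fin (k + 1) => (s p.1, p.2))
      (fun p : E × Fin (k + 1) => (t p.1, (ν p.1) p.2))
      (fun p : E × Fin (k + 1) => wt p.1) ((v, x))
      = adjugate Lc (v, x) (v, x) := by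
    rw [matrixTree (fun p : E × Fin (k + 1) => (s p.1, p.2))
      (fun p : E × Fin (k + 1) => (t p.1, (ν p.1) p.2))
      (fun p : E × Fin (k + 1) => wt p.1) ((v, x)), hLc]
    exact (adjugate_diag _ (v, x)).symm
  rw [hcov, hbase]
  -- edge-sum conversions between cover and base
  have hdsum : ∀ (w : V) (y : Fin (k+1)),
      (∑ ec ∈ univ.filter fun ec : E × Fin (k+1) => (s ec.1, ec.2) = (w, y), wt ec.1)
      = ∑ e ∈ univ.filter fun e => s e = w, wt e := by
    intro w y
    rw [Finset.sum_filter, Finset.sum_filter, Fintype.sum_prod_type]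
    refine Finset.sum_congr rfl fun e _ => ?_
    by_cases h : s e = w
    · simp [h, Prod.ext_iff]
    · simp [h, Prod.ext_iff]
  have hAC : ∀ (w : V) (y : Fin (k+1)) (w' : V) (y' : Fin (k+1)),
      (∑ ec ∈ univ.filter (fun ec : E × Fin (k+1) =>
          (s ec.1, ec.2) = (w, y) ∧ (t ec.1, ν ec.1 ec.2) = (w', y')), wt ec.1)
      = ∑ e ∈ univ.filter fun e => s e = w ∧ t e = w' ∧ ν e y = y', wt e := by
    intro w y w' y'
    rw [Finset.sum_filter, Finset.sum_filter, Fintype.sum_prod_type]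
    refine Finset.sum_congr rfl fun e _ => ?_
    rw [Finset.sum_eq_single y]
    · have : ((s e, y) = (w, y) ∧ (t e, ν e y) = (w', y'))
          ↔ (s e = w ∧ t e = w' ∧ ν e y = y') := by
        constructor
        · rintro ⟨h1, h2⟩
          rw [Prod.ext_iff] at h1 h2
          exact ⟨h1.1, h2.1, h2.2⟩
        · rintro ⟨h1, h2, h3⟩
          exact ⟨by rw [h1], by rw [h2, h3]⟩
      rw [if_congr this rfl rfl]
    · intro z _ hz
      rw [if_neg]
      rintro ⟨h1, -⟩
      rw [Prod.ext_iff] at h1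
      exact hz h1.2
    · intro h
      exact absurd (Finset.mem_univ y) h
  -- column sums over source sheets give the base Laplacian
  have hcolsum : ∀ (w w' : V) (y' : Fin (k+1)),
      (∑ y : Fin (k+1), Lc (w, y) (w', y')) = L w w' := by
    intro w w' y'
    have hent : ∀ y : Fin (k+1), Lc (w, y) (w', y')
        = (if (w, y) = (w', y') then ∑ e ∈ univ.filter (fun e => s e = w), wt e else 0)
          - ∑ e ∈ univ.filter (fun e => s e = w ∧ t e = w' ∧ ν e y = y'), wt e := by
      intro y
      rw [hLc]
      simp only [Matrix.sub_apply, Matrix.diagonal_apply, Matrix.of_apply]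
      rw [hAC w y w' y']
      congr 1
      by_cases h : (w, y) = (w', y')
      · rw [if_pos h, if_pos h, hdsum]
      · rw [if_neg h, if_neg h]
    rw [Finset.sum_congr rfl fun y _ => hent y, Finset.sum_sub_distrib, hL]
    simp only [Matrix.sub_apply, Matrix.diagonal_apply, Matrix.of_apply]
    congr 1
    · by_cases h : w = w'
      · subst h
        simp [Prod.ext_iff]
      · simp [Prod.ext_iff, h]
    · rw [Finset.sum_congr rfl (fun y _ => Finset.sum_filter _ _), Finset.sum_comm,
        Finset.sum_filter]
      refine Finset.sum_congr rfl fun e _ => ?_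
      by_cases h1 : s e = w <;> by_cases h2 : t e = w'
      · simp [h1, h2, Equiv.apply_eq_iff_eq_symm_apply]
      · simp [h1, h2]
      · simp [h1, h2]
      · simp [h1, h2]
  -- the voltage Laplacian entries
  have hLLentry : ∀ q p : V × Fin k,
      Lc (q.1, q.2.succ) (p.1, p.2.succ) - Lc (q.1, q.2.succ) (p.1, 0) = LL q p := by
    intro q p
    rw [hLc, hLL]
    simp only [Matrix.sub_apply, Matrix.diagonal_apply, Matrix.of_apply]
    rw [hAC, hAC, hdsum]
    have h1 : ((q.1, q.2.succ) = (p.1, p.2.succ)) ↔ q = p := by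
      simp [Prod.ext_iff, Fin.succ_inj]
    have h2 : ¬ ((q.1, q.2.succ) = (p.1, (0 : Fin (k+1)))) := by
      simp [Prod.ext_iff, Fin.succ_ne_zero]
    rw [if_congr h1 rfl rfl, if_neg h2]
    ring
  -- the reindexing equivalence
  set phi : V × Fin (k+1) ≃ (V ⊕ V × Fin k) :=
    { toFun := fun p => if h : p.2 = 0 then Sum.inl p.1 else Sum.inr (p.1, p.2.pred h)
      invFun := fun q => Sum.elim (fun w => (w, (0 : Fin (k+1)))) (fun r => (r.1, r.2.succ)) q
      left_inv := by
        rintro ⟨w, y⟩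
        by_cases h : y = 0
        · simp [h]
        · simp [h]
      right_inv := by
        rintro (w | ⟨w, tt⟩)
        · simp
        · simp [Fin.succ_ne_zero] } with hphi
  have hphi0 : ∀ w : V, phi (w, 0) = Sum.inl w := by intro w; simp [hphi]
  have hphisucc : ∀ (w : V) (tt : Fin k), phi (w, tt.succ) = Sum.inr (w, tt) := by
    intro w tt; simp [hphi, Fin.succ_ne_zero, Fin.pred_succ]
  have hphisymm1 : ∀ w : V, phi.symm (Sum.inl w) = (w, 0) := fun _ => rfl
  have hphisymm2 : ∀ p : V × Fin k, phi.symm (Sum.inr p) = (p.1, p.2.succ) := fun _ => rfl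
  -- basis change matrices
  set Sm : Matrix V (V × Fin k) R := Matrix.of fun w p => if w = p.1 then 1 else 0 with hSm
  set P : Matrix (V ⊕ V × Fin k) (V ⊕ V × Fin k) R := fromBlocks 1 Sm 0 1 with hP
  set P' : Matrix (V ⊕ V × Fin k) (V ⊕ V × Fin k) R := fromBlocks 1 (-Sm) 0 1 with hP'
  have hPP' : P * P' = 1 := by
    rw [hP, hP', fromBlocks_multiply]
    simp [← fromBlocks_one]
  have hP'P : P' * P = 1 := by
    rw [hP, hP', fromBlocks_multiply]
    simp [← fromBlocks_one]
  -- multiplication entry lemmas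
  have hPXl : ∀ (X : Matrix (V ⊕ V × Fin k) (V ⊕ V × Fin k) R) (a : V) b,
      (P * X) (Sum.inl a) b = X (Sum.inl a) b + ∑ tt : Fin k, X (Sum.inr (a, tt)) b := by
    intro X a b
    rw [hP, Matrix.mul_apply, Fintype.sum_sum_type]
    congr 1
    · simp [Matrix.one_apply]
    · rw [Fintype.sum_prod_type]
      rw [Finset.sum_comm]
      simp [hSm, ite_mul]
  have hPXr : ∀ (X : Matrix (V ⊕ V × Fin k) (V ⊕ V × Fin k) R) (p : V × Fin k) b,
      (P * X) (Sum.inr p) b = X (Sum.inr p) b := by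
    intro X p b
    rw [hP, Matrix.mul_apply, Fintype.sum_sum_type]
    simp [Matrix.one_apply]
  have hP'Xl : ∀ (X : Matrix (V ⊕ V × Fin k) (V ⊕ V × Fin k) R) (a : V) b,
      (P' * X) (Sum.inl a) b = X (Sum.inl a) b - ∑ tt : Fin k, X (Sum.inr (a, tt)) b := by
    intro X a b
    rw [hP', Matrix.mul_apply, Fintype.sum_sum_type, sub_eq_add_neg]
    congr 1
    · simp [Matrix.one_apply]
    · rw [Fintype.sum_prod_type]
      rw [Finset.sum_comm, ← Finset.sum_neg_distrib]
      simp [hSm, ite_mul]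
  have hP'Xr : ∀ (X : Matrix (V ⊕ V × Fin k) (V ⊕ V × Fin k) R) (p : V × Fin k) b,
      (P' * X) (Sum.inr p) b = X (Sum.inr p) b := by
    intro X p b
    rw [hP', Matrix.mul_apply, Fintype.sum_sum_type]
    simp [Matrix.one_apply]
  have hXP'l : ∀ (X : Matrix (V ⊕ V × Fin k) (V ⊕ V × Fin k) R) a (w : V),
      (X * P') a (Sum.inl w) = X a (Sum.inl w) := by
    intro X a w
    rw [hP', Matrix.mul_apply, Fintype.sum_sum_type]
    simp [Matrix.one_apply]
  have hXP'r : ∀ (X : Matrix (V ⊕ V × Fin k) (V ⊕ V × Fin k) R) a (p : V × Fin k),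
      (X * P') a (Sum.inr p) = X a (Sum.inr p) - X a (Sum.inl p.1) := by
    intro X a p
    rw [hP', Matrix.mul_apply, Fintype.sum_sum_type]
    simp only [fromBlocks_apply₁₂, fromBlocks_apply₂₂, Matrix.neg_apply, hSm, Matrix.of_apply,
      Matrix.one_apply, mul_ite, mul_one, mul_zero, mul_neg, Finset.sum_ite_eq',
      Finset.mem_univ, if_true, Finset.sum_neg_distrib]
    ring
  have hXPl : ∀ (X : Matrix (V ⊕ V × Fin k) (V ⊕ V × Fin k) R) a (w : V),
      (X * P) a (Sum.inl w) = X a (Sum.inl w) := by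
    intro X a w
    rw [hP, Matrix.mul_apply, Fintype.sum_sum_type]
    simp [Matrix.one_apply]
  have hXPr : ∀ (X : Matrix (V ⊕ V × Fin k) (V ⊕ V × Fin k) R) a (p : V × Fin k),
      (X * P) a (Sum.inr p) = X a (Sum.inr p) + X a (Sum.inl p.1) := by
    intro X a p
    rw [hP, Matrix.mul_apply, Fintype.sum_sum_type]
    simp only [fromBlocks_apply₁₂, fromBlocks_apply₂₂, hSm, Matrix.of_apply,
      Matrix.one_apply, mul_ite, mul_one, mul_zero, Finset.sum_ite_eq',
      Finset.mem_univ, if_true]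
    ring
  set Lh : Matrix (V ⊕ V × Fin k) (V ⊕ V × Fin k) R := Lc.submatrix phi.symm phi.symm with hLh
  set Mm : Matrix (V ⊕ V × Fin k) (V ⊕ V × Fin k) R := P * Lh * P' with hMm
  have hLhe : ∀ a b, Lh a b = Lc (phi.symm a) (phi.symm b) := fun _ _ => rfl
  -- block entries of Mm
  have hM11 : ∀ w w' : V, Mm (Sum.inl w) (Sum.inl w') = L w w' := by
    intro w w'
    rw [hMm, hXP'l, hPXl]
    have : Lh (Sum.inl w) (Sum.inl w') + ∑ tt : Fin k, Lh (Sum.inr (w, tt)) (Sum.inl w')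
        = ∑ y : Fin (k+1), Lc (w, y) (w', 0) := by
      rw [Fin.sum_univ_succ]
      rfl
    rw [this, hcolsum]
  have hM12 : ∀ (w : V) (p : V × Fin k), Mm (Sum.inl w) (Sum.inr p) = 0 := by
    intro w p
    rw [hMm, hXP'r, hPXl, hPXl]
    have e1 : Lh (Sum.inl w) (Sum.inr p) + ∑ tt : Fin k, Lh (Sum.inr (w, tt)) (Sum.inr p)
        = ∑ y : Fin (k+1), Lc (w, y) (p.1, p.2.succ) := by
      rw [Fin.sum_univ_succ]
      rfl
    have e2 : Lh (Sum.inl w) (Sum.inl p.1) + ∑ tt : Fin k, Lh (Sum.inr (w, tt)) (Sum.inl p.1)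
        = ∑ y : Fin (k+1), Lc (w, y) (p.1, 0) := by
      rw [Fin.sum_univ_succ]
      rfl
    rw [e1, e2, hcolsum, hcolsum, sub_self]
  have hM22 : ∀ q p : V × Fin k, Mm (Sum.inr q) (Sum.inr p) = LL q p := by
    intro q p
    rw [hMm, hXP'r, hPXr, hPXr]
    exact hLLentry q p
  set CC : Matrix (V × Fin k) V R := Matrix.of fun p w => Mm (Sum.inr p) (Sum.inl w) with hCC
  have hMb : Mm = fromBlocks L 0 CC LL := by
    ext a b
    rcases a with w | q <;> rcases b with w' | p
    · rw [fromBlocks_apply₁₁]; exact hM11 w w'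
    · rw [fromBlocks_apply₁₂]; exact hM12 w p
    · rw [fromBlocks_apply₂₁]; rfl
    · rw [fromBlocks_apply₂₂]; exact hM22 q p
  -- adjugate bookkeeping
  have hdetP : P.det = 1 := by
    rw [hP, det_fromBlocks_zero₂₁, det_one, det_one, one_mul]
  have hdetP' : P'.det = 1 := by
    rw [hP', det_fromBlocks_zero₂₁, det_one, det_one, one_mul]
  have hadjP : adjugate P = P' := by
    calc adjugate P = adjugate P * (P * P') := by rw [hPP', mul_one]
    _ = (adjugate P * P) * P' := by rw [Matrix.mul_assoc]
    _ = P' := by rw [Matrix.adjugate_mul, hdetP, one_smul, Matrix.one_mul]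
  have hadjP' : adjugate P' = P := by
    calc adjugate P' = adjugate P' * (P' * P) := by rw [hP'P, mul_one]
    _ = (adjugate P' * P') * P := by rw [Matrix.mul_assoc]
    _ = P := by rw [Matrix.adjugate_mul, hdetP', one_smul, Matrix.one_mul]
  have hLhPMP : Lh = P' * Mm * P := by
    rw [hMm]
    calc Lh = (P' * P) * Lh * (P' * P) := by rw [hP'P, Matrix.one_mul, Matrix.mul_one]
    _ = P' * (P * Lh * P') * P := by noncomm_ring
  have hadjLh : adjugate Lh = P' * adjugate Mm * P := by
    calc adjugate Lh = adjugate (P' * Mm * P) := by rw [← hLhPMP]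
    _ = adjugate P * (adjugate Mm * adjugate P') := by
        rw [adjugate_mul_distrib, adjugate_mul_distrib]
    _ = P' * adjugate Mm * P := by rw [hadjP, hadjP', Matrix.mul_assoc]
  have hadjLc : ∀ a b, adjugate Lc a b = adjugate Lh (phi a) (phi b) := by
    intro a b
    rw [hLh, adjugate_submatrix_equiv_self]
    simp
  -- determinant of the base Laplacian vanishes
  have hrowL : L *ᵥ (fun _ => (1:R)) = 0 := lap_rowsum s t wt
  have hrowLc : Lc *ᵥ (fun _ => (1:R)) = 0 :=
    lap_rowsum (fun p : E × Fin (k+1) => (s p.1, p.2))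
      (fun p : E × Fin (k+1) => (t p.1, ν p.1 p.2)) (fun p : E × Fin (k+1) => wt p.1)
  have hNV : Nonempty V := ⟨v⟩
  have hdetL : L.det = 0 := det_eq_zero_of_rowsum L hrowL
  -- the second block-column of P' * adjugate Mm vanishes
  have hPadjM_inr : ∀ a (p : V × Fin k), (P' * adjugate Mm) a (Sum.inr p) = 0 := by
    intro a p
    have h1 : ∀ w : V, adjugate Mm (Sum.inl w) (Sum.inr p) = 0 := by
      intro w; rw [hMb]; exact adjugate_fromBlocks₁₂ L CC LL w p
    have h2 : ∀ q : V × Fin k, adjugate Mm (Sum.inr q) (Sum.inr p) = 0 := by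
      intro q; rw [hMb, adjugate_fromBlocks₂₂, hdetL, zero_mul]
    rw [Matrix.mul_apply, Fintype.sum_sum_type]
    simp [h1, h2]
  -- column fiber-constancy of adjugate Lh
  have hcolconst : ∀ a (w : V) (y : Fin (k+1)),
      adjugate Lh a (phi (w, y)) = (P' * adjugate Mm) a (Sum.inl w) := by
    intro a w y
    rw [hadjLh]
    by_cases h : y = 0
    · subst h
      rw [hphi0, hXPl]
    · obtain ⟨tt, rfl⟩ : ∃ tt : Fin k, y = tt.succ := ⟨y.pred h, (Fin.succ_pred y h).symm⟩
      rw [hphisucc, hXPr, hPadjM_inr, zero_add]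
  -- the fiber diagonal sum
  have hdiagsum : ∑ y : Fin (k+1), adjugate Lc (v, y) (v, y) = LL.det * adjugate L v v := by
    have hterm : ∀ y : Fin (k+1),
        adjugate Lc (v, y) (v, y) = (P' * adjugate Mm) (phi (v, y)) (Sum.inl v) := by
      intro y; rw [hadjLc, hcolconst]
    rw [Finset.sum_congr rfl fun y _ => hterm y, Fin.sum_univ_succ, hphi0]
    rw [Finset.sum_congr rfl (fun tt _ => by rw [hphisucc])]
    rw [hP'Xl, Finset.sum_congr rfl (fun tt _ => hP'Xr (adjugate Mm) (v, tt) (Sum.inl v))]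
    rw [sub_add_cancel]
    rw [hMb]
    exact adjugate_fromBlocks₁₁ L CC LL v v
  -- fiber constancy of the diagonal entries
  have hconst : ∀ y : Fin (k+1), adjugate Lc (v, y) (v, y) = adjugate Lc (v, x) (v, x) := by
    intro y
    rw [adjugate_row_eq Lc hrowLc (v, y) (v, x) (v, y)]
    rw [hadjLc, hadjLc, hcolconst, hcolconst]
  calc ((k + 1 : ℕ) : R) * adjugate Lc (v, x) (v, x)
      = ∑ y : Fin (k+1), adjugate Lc (v, y) (v, y) := by
        rw [Finset.sum_congr rfl fun y _ => hconst y, Finset.sum_const, Finset.card_univ,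
          Fintype.card_fin, nsmul_eq_mul]
  _ = LL.det * adjugate L v v := hdiagsum
end

section
/- Let Γ = (V, E, s, t, wt) be a finite weighted directed multigraph with weights in a commutative ring R, let k ≥ 1, let ν : E → S_k be a voltage assignment, and let Γ̃_ν be the derived k-fold cover of Γ. Then the arborescence ratio is independent of the choice of root and lift: for all vertices v, w ∈ V and all x, y ∈ {1,…,k}, A_{(v,x)}(Γ̃_ν) · A_w(Γ) = A_{(w,y)}(Γ̃_ν) · A_v(Γ). -/
open Finset Matrix

theorem Fintype.sum_subtype_ne_eq_sum {V M : Type} [Fintype V] [DecidableEq V]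
    [AddCommMonoid M] {v : V} {g : V → M} (hg : g v = 0) : ∑ z : {w // w ≠ v}, g z = ∑ z, g z := by
  rw [← Finset.sum_subtype (univ.erase v) (by simp), Finset.sum_erase _ hg]

namespace Matrix

variable {n R : Type} [Fintype n] [DecidableEq n] [CommRing R]

theorem det_of_sum_rows {ι : Type} [Fintype ι] (g : n → ι → n → R) :
    (of fun i j => ∑ k, g i k j).det = ∑ r : n → ι, (of fun i j => g i (r i) j).det := by
  have := (detRowAlternating : (n → R) [⋀^n]→ₗ[R] R).toMultilinearMap.map_sum g
  simp only [Finset.sum_fn] at this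
  exact this

theorem adjugate_apply_self (A : Matrix n n R) (i : n) :
    A.adjugate i i = (A.submatrix ((↑) : {j // j ≠ i} → n) (↑)).det := by
  have : Subsingleton {j // ¬j ≠ i} :=
    ⟨fun j k => Subtype.ext ((of_not_not j.2).trans (of_not_not k.2).symm)⟩
  rw [adjugate_apply,
    twoBlockTriangular_det _ (· ≠ i) fun k hk j hj => by simp [of_not_not hk, hj],
    det_eq_elem_of_subsingleton (toSquareBlockProp _ fun j => ¬j ≠ i) ⟨i, not_not_intro rfl⟩]
  simp only [toSquareBlockProp_def, of_apply, updateRow_self, Pi.single_eq_same, mul_one]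
  congr 1
  ext j k
  simp [updateRow_ne j.2]

theorem det_eq_zero_of_mulVec_one_eq_zero [Nonempty n] {A : Matrix n n R}
    (hA : A *ᵥ (fun _ => 1) = 0) : A.det = 0 :=
  det_eq_zero_of_mulVec_eq_zero_of_mem_nonZeroDivisors hA (i := Classical.arbitrary n) (one_mem _)

theorem adjugate_apply_eq_of_mulVec_one {A : Matrix n n R} (hA : A *ᵥ (fun _ => 1) = 0)
    (i j : n) : A.adjugate i j = A.adjugate j j := by
  have : Nonempty n := ⟨i⟩
  have hdiff : (A.updateRow j (Pi.single i 1 - Pi.single j 1)).det = 0 := by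
    refine det_eq_zero_of_mulVec_one_eq_zero ?_
    rw [updateRow_mulVec, hA]
    ext k
    rcases eq_or_ne k j with rfl | hk
    · simp [sub_dotProduct]
    · simp [hk]
  have := det_updateRow_add A j (Pi.single i 1 - Pi.single j 1) (Pi.single j 1)
  rwa [sub_add_cancel, hdiff, zero_add, ← adjugate_apply, ← adjugate_apply] at this

theorem vecMul_adjugate_diag_eq_zero {A : Matrix n n R} (hA : A *ᵥ (fun _ => 1) = 0) :
    (fun i => A.adjugate i i) ᵥ* A = 0 := by
  ext j
  have : Nonempty n := ⟨j⟩
  have h := congrFun (congrFun (adjugate_mul A) j) j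
  rw [det_eq_zero_of_mulVec_one_eq_zero hA, zero_smul, mul_apply] at h
  simpa [vecMul, dotProduct, ← adjugate_apply_eq_of_mulVec_one hA j] using h

theorem eq_zero_of_vecMul_eq_zero_of_det_submatrix_ne_zero [IsDomain R] {A : Matrix n n R}
    {r : n} (hdet : (A.submatrix ((↑) : {j // j ≠ r} → n) (↑)).det ≠ 0) {b : n → R}
    (hb : b ᵥ* A = 0) (hbr : b r = 0) : b = 0 := by
  set B : Matrix {j // j ≠ r} {j // j ≠ r} R := A.submatrix (↑) (↑)
  have hB : (fun i : {j // j ≠ r} => b i) ᵥ* B = 0 := by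
    ext j
    refine (Fintype.sum_subtype_ne_eq_sum (g := fun i => b i * A i j) (by simp [hbr])).trans ?_
    exact congrFun hb j
  have : B.det • (fun i : {j // j ≠ r} => b i) = 0 := by
    rw [← vecMul_one (_ • _), smul_vecMul, ← vecMul_smul, ← mul_adjugate, ← vecMul_vecMul, hB,
      zero_vecMul]
  ext i
  rcases eq_or_ne i r with rfl | hi
  · exact hbr
  · exact congrFun ((smul_eq_zero.mp this).resolve_left hdet) ⟨i, hi⟩

end Matrix

section FunGraph

variable {V R : Type} [Fintype V] [DecidableEq V] [CommRing R]

/-- The Laplacian of the functional graph `u ↦ f u`, with row and column `v` deleted. -/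
def funGraphMinor (f : V → V) (v : V) : Matrix {w // w ≠ v} {w // w ≠ v} R :=
  Matrix.of fun u z => (Pi.single (u : V) 1 - Pi.single (f u) 1 : V → R) z

omit [Fintype V] [DecidableEq V] in
theorem exists_iterate_apply_eq_iff_of_ne {f : V → V} {u v : V} (hu : u ≠ v) :
    (∃ n, f^[n] (f u) = v) ↔ ∃ n, f^[n] u = v := by
  constructor
  · rintro ⟨n, hn⟩
    exact ⟨n + 1, hn⟩
  · rintro ⟨_ | n, hn⟩
    · exact absurd hn hu
    · exact ⟨n, hn⟩

theorem funGraphMinor_mulVec (f : V → V) (v : V) {x : V → R} (hx : x v = 0) :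
    funGraphMinor f v *ᵥ (fun z => x z) = fun u : {w // w ≠ v} => x u - x (f u) := by
  ext u
  simp only [mulVec, dotProduct, funGraphMinor, of_apply]
  refine (Fintype.sum_subtype_ne_eq_sum (v := v)
    (g := fun z => (Pi.single (u : V) 1 - Pi.single (f u) 1 : V → R) z * x z)
    (by simp [hx])).trans ?_
  simp [sub_mul, Finset.sum_sub_distrib, Pi.single_apply]

theorem det_funGraphMinor_eq_zero {f : V → V} {v : V} (h : ¬ ∀ z, ∃ n, f^[n] z = v) :
    (funGraphMinor f v : Matrix _ _ R).det = 0 := by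
  classical
  obtain ⟨z, hz⟩ := not_forall.mp h
  -- The indicator of the vertices that never reach `v` is a null vector.
  let x : V → R := fun u => if ∃ n, f^[n] u = v then 0 else 1
  refine det_eq_zero_of_mulVec_eq_zero_of_mem_nonZeroDivisors (v := fun u => x u)
    (funGraphMinor_mulVec f v (x := x) (if_pos ⟨0, rfl⟩) ▸ ?_)
    (i := ⟨z, fun h => hz ⟨0, h⟩⟩) (by simp [x, hz, one_mem])
  ext u
  simp [x, exists_iterate_apply_eq_iff_of_ne u.2]

theorem det_funGraphMinor_eq_one {f : V → V} {v : V} (h : ∀ z, ∃ n, f^[n] z = v) :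
    (funGraphMinor f v : Matrix _ _ R).det = 1 := by
  -- Ordered by decreasing distance `d` to `v`, the matrix is unitriangular.
  let d : V → ℕ := fun z => Nat.find (h z)
  have hd : ∀ u : {w // w ≠ v}, d (f u) < d u := by
    intro u
    have hpos : d u ≠ 0 := by simpa [d, Nat.find_eq_zero] using u.2
    refine lt_of_le_of_lt (Nat.find_min' _ ?_) (Nat.sub_one_lt hpos)
    rw [← Function.iterate_succ_apply, Nat.succ_eq_add_one,
      Nat.sub_add_cancel (Nat.pos_of_ne_zero hpos)]
    exact Nat.find_spec (h u)
  have hentry : ∀ u z : {w // w ≠ v}, d u ≤ d z →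
      (funGraphMinor f v : Matrix _ _ R) u z = (1 : Matrix _ _ R) u z := by
    intro u z huz
    have : f u ≠ z := fun h => (hd u).not_ge (h ▸ huz)
    simp [funGraphMinor, Pi.single_apply, one_apply, Ne.symm this, Subtype.ext_iff, eq_comm]
  have hblock :
      (funGraphMinor f v : Matrix _ _ R).BlockTriangular fun u => OrderDual.toDual (d u) :=
    fun u z huz => by
      rw [hentry u z huz.le, one_apply_ne]
      rintro rfl
      exact lt_irrefl _ huz
  rw [hblock.det]
  refine Finset.prod_eq_one fun a _ => ?_
  refine (congrArg det (?_ : _ = (1 : Matrix _ _ R))).trans det_one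
  ext u z
  rw [toSquareBlock_def, of_apply, hentry _ _ (by simpa using (z.2.trans u.2.symm).le)]
  simp [one_apply, Subtype.ext_iff]

open Classical in
theorem det_funGraphMinor (f : V → V) (v : V) :
    (funGraphMinor f v : Matrix _ _ R).det = if ∀ z, ∃ n, f^[n] z = v then 1 else 0 := by
  split_ifs with h
  · exact det_funGraphMinor_eq_one h
  · exact det_funGraphMinor_eq_zero h

end FunGraph

section Laplacian

variable {V E R : Type} [Fintype V] [DecidableEq V] [Fintype E] [CommRing R]

def outLaplacian (s t : E → V) (wt : E → R) : Matrix V V R :=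
  ∑ e, wt e • vecMulVec (Pi.single (s e) 1) (Pi.single (s e) 1 - Pi.single (t e) 1)

theorem outLaplacian_mulVec_one (s t : E → V) (wt : E → R) :
    outLaplacian s t wt *ᵥ (fun _ => 1) = 0 := by
  simp [outLaplacian, Matrix.sum_mulVec, smul_mulVec, vecMulVec_mulVec, sub_dotProduct]

theorem vecMul_outLaplacian (s t : E → V) (wt : E → R) (a : V → R) :
    a ᵥ* outLaplacian s t wt =
      ∑ e, (a (s e) * wt e) • (Pi.single (s e) 1 - Pi.single (t e) 1) := by
  simp [outLaplacian, Matrix.vecMul_sum, vecMul_smul, vecMul_vecMulVec, smul_smul, mul_comm]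

theorem det_submatrix_outLaplacian (s t : E → V) (wt : E → R) (v : V) :
    ((outLaplacian s t wt).submatrix ((↑) : {w // w ≠ v} → V) (↑)).det = arbSum s t wt v := by
  let step (T : {w // w ≠ v} → E) : V → V := fun u => if h : u = v then v else t (T ⟨u, h⟩)
  have hrows : (outLaplacian s t wt).submatrix ((↑) : {w // w ≠ v} → V) (↑) =
      of fun u z : {w // w ≠ v} => ∑ e, (if s e = u then wt e else 0) *
        (Pi.single (u : V) 1 - Pi.single (t e) 1 : V → R) z := by
    ext u z
    simp only [outLaplacian, submatrix_apply, of_apply, Matrix.sum_apply, Matrix.smul_apply,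
      vecMulVec_apply, smul_eq_mul]
    refine Finset.sum_congr rfl fun e _ => ?_
    by_cases he : s e = u <;> simp [he, Pi.single_apply]
  have hterm (T : {w // w ≠ v} → E) (u z : {w // w ≠ v}) :
      (Pi.single (u : V) 1 - Pi.single (t (T u)) 1 : V → R) z =
        funGraphMinor (step T) v u z := by
    simp [funGraphMinor, step, u.2]
  rw [hrows, det_of_sum_rows, arbSum]
  refine Finset.sum_congr rfl fun T _ => ?_
  simp_rw [hterm T]
  rw [det_mul_column (fun u => if s (T u) = u then wt (T u) else 0), det_funGraphMinor,
    Finset.prod_ite_zero]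
  simp only [Finset.mem_univ, forall_const]
  rw [ite_zero_mul_ite_zero, mul_one]

theorem vecMul_outLaplacian_arbSum (s t : E → V) (wt : E → R) :
    (fun u => arbSum s t wt u) ᵥ* outLaplacian s t wt = 0 := by
  simpa only [← det_submatrix_outLaplacian, ← adjugate_apply_self] using
    vecMul_adjugate_diag_eq_zero (outLaplacian_mulVec_one s t wt)

theorem arbSum_map {S : Type} [CommRing S] (φ : R →+* S) (s t : E → V) (wt : E → R) (v : V) :
    φ (arbSum s t wt v) = arbSum s t (fun e => φ (wt e)) v := by
  simp only [arbSum, map_sum, apply_ite φ, map_prod, map_zero]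

section Cover

variable {F : Type} [Fintype F] [DecidableEq F]

omit [Fintype V] in
theorem sum_pi_single_mk_apply (c z : V) (y : F) :
    ∑ x, (Pi.single (c, x) 1 : V × F → R) (z, y) = (Pi.single c 1 : V → R) z := by
  simp [Pi.single_apply, Prod.ext_iff, ite_and]

omit [Fintype V] in
theorem sum_pi_single_mk_perm_apply (σ : Equiv.Perm F) (c z : V) (y : F) :
    ∑ x, (Pi.single (c, σ x) 1 : V × F → R) (z, y) = (Pi.single c 1 : V → R) z := by
  rw [Equiv.sum_comp σ fun x => (Pi.single (c, x) 1 : V × F → R) (z, y), sum_pi_single_mk_apply]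

theorem vecMul_outLaplacian_cover_eq_zero (s t : E → V) (wt : E → R) (ν : E → Equiv.Perm F)
    {a : V → R} (ha : a ᵥ* outLaplacian s t wt = 0) :
    (fun q : V × F => a q.1) ᵥ* outLaplacian (fun p : E × F => (s p.1, p.2))
      (fun p => (t p.1, ν p.1 p.2)) (fun p => wt p.1) = 0 := by
  ext ⟨z, y⟩
  have := congrFun ha z
  simp only [vecMul_outLaplacian, Finset.sum_apply, Fintype.sum_prod_type,
    Pi.zero_apply] at this ⊢
  rw [← this]
  refine Finset.sum_congr rfl fun e _ => ?_
  simp only [Pi.smul_apply, Pi.sub_apply, smul_eq_mul, ← Finset.mul_sum, Finset.sum_sub_distrib]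
  rw [sum_pi_single_mk_apply, sum_pi_single_mk_perm_apply]

theorem arbSum_cover_mul_arbSum_comm [IsDomain R] (s t : E → V) (wt : E → R)
    (ν : E → Equiv.Perm F) (v w : V) (x y : F) :
    arbSum (fun p : E × F => (s p.1, p.2)) (fun p => (t p.1, ν p.1 p.2)) (fun p => wt p.1)
        (v, x) * arbSum s t wt w =
      arbSum (fun p : E × F => (s p.1, p.2)) (fun p => (t p.1, ν p.1 p.2)) (fun p => wt p.1)
        (w, y) * arbSum s t wt v := by
  set s' : E × F → V × F := fun p => (s p.1, p.2)
  set t' : E × F → V × F := fun p => (t p.1, ν p.1 p.2)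
  set wt' : E × F → R := fun p => wt p.1
  set A : V × F → R := arbSum s' t' wt'
  set a : V → R := arbSum s t wt
  by_cases hA : ∀ q, A q = 0
  · rw [hA, hA, zero_mul, zero_mul]
  obtain ⟨r, hr⟩ := not_forall.mp hA
  have hA_ker : A ᵥ* outLaplacian s' t' wt' = 0 := vecMul_outLaplacian_arbSum s' t' wt'
  have ha_ker : (fun q : V × F => a q.1) ᵥ* outLaplacian s' t' wt' = 0 :=
    vecMul_outLaplacian_cover_eq_zero s t wt ν (vecMul_outLaplacian_arbSum s t wt)
  have hprop (q : V × F) : A r * a q.1 = a r.1 * A q := by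
    have hb := eq_zero_of_vecMul_eq_zero_of_det_submatrix_ne_zero (r := r)
      ((det_submatrix_outLaplacian s' t' wt' r).trans_ne hr)
      (b := A r • (fun q => a q.1) - a r.1 • A)
      (by rw [sub_vecMul, smul_vecMul, smul_vecMul, hA_ker, ha_ker, smul_zero, smul_zero, sub_zero])
      (by simp [mul_comm])
    simpa [sub_eq_zero] using congrFun hb q
  refine mul_left_cancel₀ hr ?_
  linear_combination A (v, x) * hprop (w, y) - A (w, y) * hprop (v, x)

end Cover

end Laplacian

theorem arborescence_ratio_root_independent_general
    {V E R : Type} [Fintype V] [DecidableEq V] [Fintype E] [CommRing R]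
    (s t : E → V) (wt : E → R) (k : ℕ) (ν : E → Equiv.Perm (Fin (k + 1)))
    (v w : V) (x y : Fin (k + 1)) :
    arbSum (fun p : E × Fin (k + 1) => (s p.1, p.2))
        (fun p : E × Fin (k + 1) => (t p.1, (ν p.1) p.2))
        (fun p : E × Fin (k + 1) => wt p.1) ((v, x)) * arbSum s t wt w
    = arbSum (fun p : E × Fin (k + 1) => (s p.1, p.2))
        (fun p : E × Fin (k + 1) => (t p.1, (ν p.1) p.2))
        (fun p : E × Fin (k + 1) => wt p.1) ((w, y)) * arbSum s t wt v := by
  have hgeneric := congrArg (MvPolynomial.eval₂Hom (Int.castRingHom R) wt)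
    (arbSum_cover_mul_arbSum_comm s t (MvPolynomial.X : E → MvPolynomial E ℤ) ν v w x y)
  simpa only [map_mul, arbSum_map, MvPolynomial.eval₂Hom_X'] using hgeneric

/-- (Galashin–Pylyavskyy.)  For a weighted digraph `Γ = (V, E, s, t, wt)`, a voltage
assignment `ν : E → S_{k+1}` (the fold number `k+1` ranges over all integers ≥ 1), and
the derived (k+1)-fold cover `Γ̃_ν` (vertices `V × Fin (k+1)`, edges `E × Fin (k+1)`,
source `(e,x) ↦ (s e, x)`, target `(e,x) ↦ (t e, ν e x)`, weight `wt e`), the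
arborescence ratio is independent of the choice of root and lift: for all vertices
`v, w` and lifts `(v, x)`, `(w, y)`,
`A_{(v,x)}(Γ̃_ν) ⬝ A_w(Γ) = A_{(w,y)}(Γ̃_ν) ⬝ A_v(Γ)`. -/
theorem arborescence_ratio_root_independent
    {V E R : Type} [Fintype V] [DecidableEq V] [Fintype E] [DecidableEq E] [CommRing R]
    (s t : E → V) (wt : E → R) (k : ℕ) (ν : E → Equiv.Perm (Fin (k + 1)))
    (v w : V) (x y : Fin (k + 1)) :
    arbSum (fun p : E × Fin (k + 1) => (s p.1, p.2))
        (fun p : E × Fin (k + 1) => (t p.1, (ν p.1) p.2))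
        (fun p : E × Fin (k + 1) => wt p.1) ((v, x)) * arbSum s t wt w
    = arbSum (fun p : E × Fin (k + 1) => (s p.1, p.2))
        (fun p : E × Fin (k + 1) => (t p.1, (ν p.1) p.2))
        (fun p : E × Fin (k + 1) => wt p.1) ((w, y)) * arbSum s t wt v :=
  arborescence_ratio_root_independent_general s t wt k ν v w x y
end

section
/- (Gross–Tucker.) Let Γ = (V, E, s, t) and Γ̃ = (Ṽ, Ẽ, s̃, t̃) be finite directed multigraphs, let k ≥ 1, and suppose π = (π_V : Ṽ → V, π_E : Ẽ → E) is a k-fold covering of directed multigraphs, i.e.: s ∘ π_E = π_V ∘ s̃ and t ∘ π_E = π_V ∘ t̃; every fiber π_V^{-1}(v) and every fiber π_E^{-1}(e) has exactly k elements; and for every ṽ ∈ Ṽ, the map π_E restricts to a bijection from the set of edges of Γ̃ with source ṽ onto the set of edges of Γ with source π_V(ṽ), and to a bijection from the set of edges with target ṽ onto the set of edges with target π_V(ṽ). Then there exist a voltage assignment ν : E → S_k and bijections φ_V : Ṽ → V × {1,…,k} and φ_E : Ẽ → E × {1,…,k} such that φ_V ∘ s̃ = s' ∘ φ_E and φ_V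 ∘ t̃ = t' ∘ φ_E, where s'(e,x) = (s(e), x) and t'(e,x) = (t(e), ν(e)(x)) are the source and target maps of the derived k-fold cover, and such that the first coordinate of φ_V equals π_V and the first coordinate of φ_E equals π_E. -/
/-- (Gross–Tucker.)  Let `Γ = (V, E, s, t)` and `Γ̃ = (Vc, Ec, sc, tc)` be finite
directed multigraphs and let `π = (πV, πE)` be a `k`-fold covering (`k ≥ 1`):
the projections commute with source and target maps, every vertex fiber and every
edge fiber has exactly `k` elements, and `πE` restricts to a bijection on outgoing
(resp. incoming) edge sets at every vertex of the cover.  Then `Γ̃` is isomorphic,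
over `π`, to the derived cover of a permutation voltage assignment `ν : E → S_k`:
there are bijections `φV : Vc ≃ V × Fin k` and `φE : Ec ≃ E × Fin k` commuting with
source and target maps of the derived cover (`s' (e,x) = (s e, x)`,
`t' (e,x) = (t e, ν e x)`) whose first coordinates are `πV` and `πE`. -/
theorem gross_tucker
    {V E Vc Ec : Type} [Fintype V] [DecidableEq V] [Fintype E] [DecidableEq E]
    [Fintype Vc] [DecidableEq Vc] [Fintype Ec] [DecidableEq Ec]
    (s t : E → V) (sc tc : Ec → Vc) (k : ℕ) (hk : 1 ≤ k)
    (πV : Vc → V) (πE : Ec → E)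
    (hs : ∀ f : Ec, s (πE f) = πV (sc f))
    (ht : ∀ f : Ec, t (πE f) = πV (tc f))
    (hfibV : ∀ v : V, (Finset.univ.filter fun w : Vc => πV w = v).card = k)
    (hfibE : ∀ e : E, (Finset.univ.filter fun f : Ec => πE f = e).card = k)
    (hlocS : ∀ w : Vc, Set.BijOn πE {f : Ec | sc f = w} {e : E | s e = πV w})
    (hlocT : ∀ w : Vc, Set.BijOn πE {f : Ec | tc f = w} {e : E | t e = πV w}) :
    ∃ (ν : E → Equiv.Perm (Fin k)) (φV : Vc ≃ V × Fin k) (φE : Ec ≃ E × Fin k),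
      (∀ f : Ec, φV (sc f) = (s (φE f).1, (φE f).2)) ∧
      (∀ f : Ec, φV (tc f) = (t (φE f).1, ν (φE f).1 (φE f).2)) ∧
      (∀ w : Vc, (φV w).1 = πV w) ∧
      (∀ f : Ec, (φE f).1 = πE f) := by

  classical
  have cardV : ∀ v : V, Fintype.card {w : Vc // πV w = v} = k := by
    intro v; rw [Fintype.card_subtype]; exact hfibV v
  let eV : ∀ v : V, {w : Vc // πV w = v} ≃ Fin k := fun v =>
    Fintype.equivFinOfCardEq (cardV v)
  let φV : Vc ≃ V × Fin k :=
    (Equiv.sigmaFiberEquiv πV).symm.trans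
      ((Equiv.sigmaCongrRight eV).trans (Equiv.sigmaEquivProd V (Fin k)))
  have hφV1 : ∀ w, (φV w).1 = πV w := fun w => rfl
  have cardEc : Fintype.card Ec = Fintype.card (E × Fin k) := by
    rw [Fintype.card_prod, Fintype.card_fin, ← Finset.card_univ,
      Finset.card_eq_sum_card_fiberwise (f := πE) (t := Finset.univ)
        (fun x _ => Finset.mem_univ _)]
    simp [hfibE, Finset.card_univ, mul_comm]
  let g : Ec → E × Fin k := fun f => (πE f, (φV (sc f)).2)
  have ginj : Function.Injective g := by
    intro f f' h
    simp only [g, Prod.mk.injEq] at h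
    obtain ⟨h1, h2⟩ := h
    have hv : πV (sc f) = πV (sc f') := by rw [← hs, ← hs, h1]
    have heq : φV (sc f) = φV (sc f') :=
      Prod.ext (by rw [hφV1, hφV1, hv]) h2
    have hsc : sc f = sc f' := φV.injective heq
    exact (hlocS (sc f)).2.1 (by simp) (by simp [hsc]) h1
  have gbij : Function.Bijective g :=
    (Fintype.bijective_iff_injective_and_card g).2 ⟨ginj, cardEc⟩
  let φE : Ec ≃ E × Fin k := Equiv.ofBijective g gbij
  have hφE : ∀ f, φE f = (πE f, (φV (sc f)).2) := fun f => rfl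
  let h : E → Fin k → Fin k := fun e x => (φV (tc (φE.symm (e, x)))).2
  have hinj : ∀ e, Function.Injective (h e) := by
    intro e x y hxy
    set f := φE.symm (e, x) with hf
    set f' := φE.symm (e, y) with hf'
    have hπf : πE f = e := by
      have := congrArg Prod.fst (φE.apply_symm_apply (e, x))
      simpa [hφE] using this
    have hπf' : πE f' = e := by
      have := congrArg Prod.fst (φE.apply_symm_apply (e, y))
      simpa [hφE] using this
    have hv : πV (tc f) = πV (tc f') := by rw [← ht, ← ht, hπf, hπf']
    have htc : tc f = tc f' :=
      φV.injective (Prod.ext (by rw [hφV1, hφV1, hv]) hxy)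
    have hff : f = f' :=
      (hlocT (tc f)).2.1 (by simp) (by simp [htc]) (by rw [hπf, hπf'])
    have := congrArg (fun z => (φE z).2) hff
    simpa [hf, hf', φE.apply_symm_apply] using this
  let ν : E → Equiv.Perm (Fin k) := fun e =>
    Equiv.ofBijective (h e) (Finite.injective_iff_bijective.1 (hinj e))
  refine ⟨ν, φV, φE, ?_, ?_, hφV1, fun f => rfl⟩
  · intro f
    exact Prod.ext (by rw [hφV1]; exact (hs f).symm) rfl
  · intro f
    have hν : ν (φE f).1 (φE f).2 = (φV (tc f)).2 := by
      show (φV (tc (φE.symm ((φE f).1, (φE f).2)))).2 = _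
      rw [show ((φE f).1, (φE f).2) = φE f from rfl, φE.symm_apply_apply]
    refine Prod.ext ?_ hν.symm
    rw [hφV1]
    have : (φE f).1 = πE f := rfl
    rw [this, ht]
end
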